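/- arXiv:1912.07205 — 8 statements merged into one kernel-verified Lean document; each statement's English description precedes it below -/
import Mathlib

section
/- Let G be a finite simple graph, f a proper 4-coloring of G, and a, b ∈ Fin 4 distinct colors with f⁻¹({a,b}) ≠ ∅, and let p = p_f(a,b) be the number of ab-Kempe chains of f. Then the set of coloring-partitions of G obtained from f by ab-Kempe changes, excluding the coloring-partition of f itself, has exactly 2^(p−1) − 1 elements. -/
/-- A proper 4-coloring of a simple graph `G`. -/
def IsProperColoring {V : Type*} (G : SimpleGraph V) (f : V → Fin 4) : Prop :=
  ∀ ⦃u v : V⦄, G.Adj u v → f u ≠ f v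

/-- `kempeCount G f a b` is the number of `ab`-Kempe chains of `f`, i.e. the number of
connected components of the subgraph of `G` induced on `f⁻¹({a, b})`. -/
noncomputable def kempeCount {V : Type*} (G : SimpleGraph V) (f : V → Fin 4)
    (a b : Fin 4) : ℕ :=
  Nat.card ((G.induce {v | f v = a ∨ f v = b}).ConnectedComponent)

/-- Tutte's quantity `J_a(f) = p(a,b) + p(a,c) + p(a,d) - p(b,c) - p(b,d) - p(c,d)`,
where `{b, c, d} = Fin 4 \ {a}`. -/
noncomputable def Jcol {V : Type*} (G : SimpleGraph V) (f : V → Fin 4) (a : Fin 4) : ℤ :=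
  (∑ x ∈ Finset.univ.erase a, (kempeCount G f a x : ℤ)) -
    ∑ x ∈ Finset.univ.erase a,
      ∑ y ∈ (Finset.univ.erase a).filter (fun y => x < y), (kempeCount G f x y : ℤ)

/-- The coloring-partition of `f`: the set of its nonempty color classes. -/
def colPart {V : Type*} (f : V → Fin 4) : Set (Set V) :=
  {A | A.Nonempty ∧ ∃ c, A = f ⁻¹' {c}}

/-- `P` is a coloring-partition of `G` if it is the coloring-partition of some proper
4-coloring of `G`. -/
def IsColoringPartition {V : Type*} (G : SimpleGraph V) (P : Set (Set V)) : Prop :=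
  ∃ f, IsProperColoring G f ∧ P = colPart f

/-- The set of all color classes of proper 4-colorings of `G`. -/
def colorClasses {V : Type*} (G : SimpleGraph V) : Set (Set V) :=
  {A | A.Nonempty ∧ ∃ f c, IsProperColoring G f ∧ A = f ⁻¹' {c}}

/-- The 4-coloring complex `B(G)`: vertices are color classes of proper 4-colorings of `G`,
two distinct classes being adjacent iff they are color classes of a common proper
4-coloring. -/
def colorComplex {V : Type*} (G : SimpleGraph V) : SimpleGraph (colorClasses G) :=
  SimpleGraph.fromRel (fun A B => ∃ f, IsProperColoring G f ∧
    (∃ c, (A : Set V) = f ⁻¹' {c}) ∧ (∃ c, (B : Set V) = f ⁻¹' {c}))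

/-- Two proper 4-colorings are adjacent if they have a common (nonempty) color class. -/
def ColAdj {V : Type*} (G : SimpleGraph V) (f g : V → Fin 4) : Prop :=
  IsProperColoring G f ∧ IsProperColoring G g ∧
    ∃ c c', (f ⁻¹' {c}).Nonempty ∧ f ⁻¹' {c} = g ⁻¹' {c'}

/-- `W` is a union of `ab`-Kempe chains of `f`: it is a subset of `f⁻¹({a,b})` closed
under reachability in the induced subgraph on `f⁻¹({a,b})`. -/
def IsChainUnion {V : Type*} (G : SimpleGraph V) (f : V → Fin 4) (a b : Fin 4)
    (W : Set V) : Prop :=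
  W ⊆ {v | f v = a ∨ f v = b} ∧
    ∀ u v : {v | f v = a ∨ f v = b},
      (G.induce {v | f v = a ∨ f v = b}).Reachable u v → ((u : V) ∈ W ↔ (v : V) ∈ W)

open scoped Classical in
/-- The `ab`-Kempe change of `f` on the set `W`: swap the colors `a` and `b` on `W`. -/
noncomputable def kempeChange {V : Type*} (f : V → Fin 4) (a b : Fin 4) (W : Set V) :
    V → Fin 4 :=
  fun v => if v ∈ W then (if f v = a then b else if f v = b then a else f v) else f v

/-!
A union `W` of `ab`-Kempe chains is determined by the set `T` of chains it contains. As
`W ⊆ f⁻¹{a,b}`, the Kempe change on `W` has colour classes `f⁻¹{a} ∆ W`, `f⁻¹{b} ∆ W` and the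
other classes of `f`. Reading off the class of one vertex of `f⁻¹{a,b}` shows that two Kempe
changes give the same coloring-partition iff `T' = T` or `T' = Tᶜ`, the latter because
complementing `W` inside `f⁻¹{a,b}` just swaps the names `a` and `b`. So the coloring-partitions
obtained are counted by the `2^(p-1)` sets of chains avoiding a fixed chain, and exactly one of
them, `T = ∅`, gives the coloring-partition of `f`.
-/

open scoped symmDiff

section KempeChange

variable {V : Type*} {f : V → Fin 4} {a b : Fin 4} {W W' : Set V}

open scoped Classical in
theorem kempeChange_apply (f : V → Fin 4) (a b : Fin 4) (W : Set V) (v : V) :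
    kempeChange f a b W v = if v ∈ W then Equiv.swap a b (f v) else f v := by
  simp only [kempeChange, Equiv.swap_apply_def]

@[simp]
theorem kempeChange_empty (f : V → Fin 4) (a b : Fin 4) : kempeChange f a b ∅ = f := by
  funext v
  simp [kempeChange]

theorem kempeChange_diff (f : V → Fin 4) (a b : Fin 4) (W : Set V) :
    kempeChange f a b ({v | f v = a ∨ f v = b} \ W) = Equiv.swap a b ∘ kempeChange f a b W := by
  funext v
  simp only [kempeChange_apply, Function.comp_apply, Set.mem_sdiff, Set.mem_ofPred_eq]
  by_cases hv : v ∈ W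
  · simp [hv]
  · by_cases hU : f v = a ∨ f v = b
    · simp [hv, hU]
    · push Not at hU
      simp [hv, hU, Equiv.swap_apply_of_ne_of_ne]

theorem kempeChange_mem_pair_iff (v : V) :
    kempeChange f a b W v = a ∨ kempeChange f a b W v = b ↔ f v = a ∨ f v = b := by
  rw [kempeChange_apply]
  split_ifs
  · rw [Equiv.swap_apply_eq_iff, Equiv.swap_apply_eq_iff, Equiv.swap_apply_left,
      Equiv.swap_apply_right, or_comm]
  · rfl

theorem kempeChange_preimage_eq_symmDiff (hab : a ≠ b) {c : Fin 4} (hc : c = a ∨ c = b)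
    (hW : W ⊆ {v | f v = a ∨ f v = b}) :
    kempeChange f a b W ⁻¹' {c} = (f ⁻¹' {c}) ∆ W := by
  ext v
  simp only [Set.mem_preimage, Set.mem_singleton_iff, Set.mem_symmDiff, kempeChange_apply]
  by_cases hv : v ∈ W
  · rcases hW hv with h | h <;> rcases hc with rfl | rfl <;> simp [hv, h, hab, hab.symm]
  · simp [hv]

theorem colPart_perm_comp (σ : Equiv.Perm (Fin 4)) (g : V → Fin 4) :
    colPart (σ ∘ g) = colPart g := by
  ext A
  refine and_congr_right fun _ => ⟨?_, ?_⟩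
  · rintro ⟨c, rfl⟩
    exact ⟨σ.symm c, by ext v; simp [Equiv.eq_symm_apply]⟩
  · rintro ⟨c, rfl⟩
    exact ⟨σ c, by ext v; simp⟩

theorem colPart_kempeChange_diff (f : V → Fin 4) (a b : Fin 4) (W : Set V) :
    colPart (kempeChange f a b ({v | f v = a ∨ f v = b} \ W)) = colPart (kempeChange f a b W) := by
  rw [kempeChange_diff, colPart_perm_comp]

theorem preimage_eq_preimage_of_colPart_eq {g g' : V → Fin 4} (h : colPart g = colPart g')
    {v : V} : g ⁻¹' {g v} = g' ⁻¹' {g' v} := by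
  obtain ⟨-, c, hc⟩ : g ⁻¹' {g v} ∈ colPart g' := h ▸ ⟨⟨v, rfl⟩, g v, rfl⟩
  have hv : g' v = c := by simpa using hc.subst (motive := (v ∈ ·)) rfl
  rw [hc, hv]

theorem eq_or_eq_diff_of_colPart_kempeChange_eq_of_nonempty (hab : a ≠ b)
    (hW : W ⊆ {v | f v = a ∨ f v = b}) (hW' : W' ⊆ {v | f v = a ∨ f v = b})
    (h : colPart (kempeChange f a b W) = colPart (kempeChange f a b W'))
    (hne : (kempeChange f a b W ⁻¹' {a}).Nonempty) :
    W' = W ∨ W' = {v | f v = a ∨ f v = b} \ W := by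
  obtain ⟨v, hv : kempeChange f a b W v = a⟩ := hne
  have hclass := preimage_eq_preimage_of_colPart_eq h (v := v)
  rw [hv, kempeChange_preimage_eq_symmDiff hab (.inl rfl) hW] at hclass
  rcases (kempeChange_mem_pair_iff v).2 ((kempeChange_mem_pair_iff v).1 (.inl hv)) with hv' | hv'
  · rw [hv', kempeChange_preimage_eq_symmDiff hab (.inl rfl) hW'] at hclass
    exact .inl (symmDiff_right_injective _ hclass).symm
  · rw [hv', kempeChange_preimage_eq_symmDiff hab (.inr rfl) hW'] at hclass
    have hU : (f ⁻¹' {b}) ∆ (f ⁻¹' {a}) = {v | f v = a ∨ f v = b} := by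
      ext v
      simp only [Set.mem_symmDiff, Set.mem_preimage, Set.mem_singleton_iff, Set.mem_ofPred_eq]
      grind
    right
    calc W' = (f ⁻¹' {b}) ∆ ((f ⁻¹' {a}) ∆ W) := by rw [hclass, symmDiff_symmDiff_cancel_left]
      _ = {v | f v = a ∨ f v = b} ∆ W := by rw [← symmDiff_assoc, hU]
      _ = {v | f v = a ∨ f v = b} \ W := by rw [symmDiff_comm, symmDiff_of_le hW]

theorem eq_or_eq_diff_of_colPart_kempeChange_eq (hab : a ≠ b)
    (hW : W ⊆ {v | f v = a ∨ f v = b}) (hW' : W' ⊆ {v | f v = a ∨ f v = b})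
    (h : colPart (kempeChange f a b W) = colPart (kempeChange f a b W')) :
    W' = W ∨ W' = {v | f v = a ∨ f v = b} \ W := by
  rcases (kempeChange f a b W ⁻¹' {a}).eq_empty_or_nonempty with hW₀ | hW₀
  · rcases (kempeChange f a b W' ⁻¹' {a}).eq_empty_or_nonempty with hW'₀ | hW'₀
    · rw [kempeChange_preimage_eq_symmDiff hab (.inl rfl) hW, ← Set.bot_eq_empty,
        symmDiff_eq_bot] at hW₀
      rw [kempeChange_preimage_eq_symmDiff hab (.inl rfl) hW', ← Set.bot_eq_empty,
        symmDiff_eq_bot] at hW'₀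
      exact .inl (hW'₀.symm.trans hW₀)
    · rcases eq_or_eq_diff_of_colPart_kempeChange_eq_of_nonempty hab hW' hW h.symm hW'₀
        with hWW' | hWW'
      · exact .inl hWW'.symm
      · exact .inr (by rw [hWW', Set.sdiff_sdiff_cancel_left hW'])
  · exact eq_or_eq_diff_of_colPart_kempeChange_eq_of_nonempty hab hW hW' h hW₀

end KempeChange

section KempeChains

variable {V : Type*} (G : SimpleGraph V) (f : V → Fin 4) (a b : Fin 4)

abbrev kempeGraph : SimpleGraph {v | f v = a ∨ f v = b} :=
  G.induce {v | f v = a ∨ f v = b}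

def unionOfChains (T : Set (kempeGraph G f a b).ConnectedComponent) : Set V :=
  {v | ∃ h : f v = a ∨ f v = b, (kempeGraph G f a b).connectedComponentMk ⟨v, h⟩ ∈ T}

variable {G f a b}

theorem mem_unionOfChains {T : Set (kempeGraph G f a b).ConnectedComponent} {v : V}
    (hv : f v = a ∨ f v = b) :
    v ∈ unionOfChains G f a b T ↔ (kempeGraph G f a b).connectedComponentMk ⟨v, hv⟩ ∈ T :=
  ⟨fun ⟨_, hT⟩ => hT, fun hT => ⟨hv, hT⟩⟩

theorem unionOfChains_subset (T : Set (kempeGraph G f a b).ConnectedComponent) :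
    unionOfChains G f a b T ⊆ {v | f v = a ∨ f v = b} :=
  fun _ hv => hv.1

@[simp]
theorem unionOfChains_empty : unionOfChains G f a b ∅ = ∅ := by
  ext v
  simp [unionOfChains]

theorem unionOfChains_compl (T : Set (kempeGraph G f a b).ConnectedComponent) :
    unionOfChains G f a b Tᶜ = {v | f v = a ∨ f v = b} \ unionOfChains G f a b T := by
  ext v
  exact ⟨fun ⟨hv, hT⟩ => ⟨hv, fun h => hT ((mem_unionOfChains hv).1 h)⟩,
    fun ⟨hv, hT⟩ => ⟨hv, fun h => hT ⟨hv, h⟩⟩⟩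

theorem unionOfChains_injective : Function.Injective (unionOfChains G f a b) := by
  intro T T' h
  ext K
  induction K using SimpleGraph.ConnectedComponent.ind with
  | h u => rw [← mem_unionOfChains u.2, ← mem_unionOfChains u.2, h]

theorem isChainUnion_iff_mem_range {W : Set V} :
    IsChainUnion G f a b W ↔ W ∈ Set.range (unionOfChains G f a b) := by
  constructor
  · rintro ⟨hWU, hW⟩
    refine ⟨{K | ∃ u, (kempeGraph G f a b).connectedComponentMk u = K ∧ (u : V) ∈ W}, ?_⟩
    ext v
    refine ⟨fun ⟨hv, u, hu, huW⟩ => (hW u ⟨v, hv⟩ (SimpleGraph.ConnectedComponent.eq.1 hu)).1 huW,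
      fun hvW => ⟨hWU hvW, ⟨v, hWU hvW⟩, rfl, hvW⟩⟩
  · rintro ⟨T, rfl⟩
    refine ⟨unionOfChains_subset T, fun u v huv => ?_⟩
    rw [mem_unionOfChains u.2, mem_unionOfChains v.2]
    exact iff_of_eq (congrArg (· ∈ T) (SimpleGraph.ConnectedComponent.sound huv))

variable (G f a b) in
def kempePartition (T : Set (kempeGraph G f a b).ConnectedComponent) : Set (Set V) :=
  colPart (kempeChange f a b (unionOfChains G f a b T))

theorem kempePartition_eq_iff (hab : a ≠ b) (T T' : Set (kempeGraph G f a b).ConnectedComponent) :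
    kempePartition G f a b T = kempePartition G f a b T' ↔ T' = T ∨ T' = Tᶜ := by
  rw [kempePartition, kempePartition, ← unionOfChains_injective.eq_iff (a := T') (b := T),
    ← unionOfChains_injective.eq_iff (a := T') (b := Tᶜ), unionOfChains_compl]
  refine ⟨eq_or_eq_diff_of_colPart_kempeChange_eq hab (unionOfChains_subset T)
    (unionOfChains_subset T'), ?_⟩
  rintro (h | h) <;> rw [h]
  exact (colPart_kempeChange_diff f a b _).symm

end KempeChains

theorem ncard_range_sdiff_of_eq_iff {α β : Type*} [Finite α] [Nonempty α] {Φ : Set α → β}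
    (hΦ : ∀ T T', Φ T = Φ T' ↔ T' = T ∨ T' = Tᶜ) :
    (Set.range Φ \ {Φ ∅}).ncard = 2 ^ (Nat.card α - 1) - 1 := by
  obtain ⟨x⟩ := ‹Nonempty α›
  have hrange : Set.range Φ = Φ '' 𝒫 {x}ᶜ := by
    refine (Set.image_subset_range _ _).antisymm' ?_
    rintro _ ⟨T, rfl⟩
    by_cases hx : x ∈ T
    · exact ⟨Tᶜ, by simpa using hx, (hΦ _ _).2 (.inr (compl_compl T).symm)⟩
    · exact ⟨T, by simpa using hx, rfl⟩
  have hinj : Set.InjOn Φ (𝒫 {x}ᶜ) := by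
    intro T hT T' hT' h
    rcases (hΦ T T').1 h with h | rfl
    · exact h.symm
    · simp_all
  rw [Set.ncard_sdiff_singleton_of_mem (Set.mem_range_self ∅), hrange, hinj.ncard_image,
    Set.ncard_powerset, Set.ncard_compl, Set.ncard_singleton]

theorem kempe_change_partitions_card_general {V : Type*} [Fintype V] (G : SimpleGraph V)
    (f : V → Fin 4) (a b : Fin 4) (hab : a ≠ b)
    (hne : {v | f v = a ∨ f v = b}.Nonempty) :
    ({P : Set (Set V) | ∃ W, IsChainUnion G f a b W ∧ P = colPart (kempeChange f a b W)}
        \ {colPart f}).ncard = 2 ^ (kempeCount G f a b - 1) - 1 := by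
  have hrange : {P : Set (Set V) | ∃ W, IsChainUnion G f a b W ∧
      P = colPart (kempeChange f a b W)} = Set.range (kempePartition G f a b) := by
    ext P
    simp only [isChainUnion_iff_mem_range, Set.mem_range, kempePartition]
    grind
  have hf : colPart f = kempePartition G f a b ∅ := by simp [kempePartition]
  have : Nonempty (kempeGraph G f a b).ConnectedComponent :=
    ⟨(kempeGraph G f a b).connectedComponentMk ⟨_, hne.some_mem⟩⟩
  rw [hrange, hf]
  exact ncard_range_sdiff_of_eq_iff (kempePartition_eq_iff hab)

/-- If `f⁻¹({a,b}) ≠ ∅` and `p = p_f(a,b)` is the number of `ab`-Kempe chains, then the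
set of coloring-partitions obtained from `f` by `ab`-Kempe changes, other than the
coloring-partition of `f` itself, has exactly `2 ^ (p - 1) - 1` elements. -/
theorem kempe_change_partitions_card {V : Type*} [Fintype V] (G : SimpleGraph V)
    (f : V → Fin 4) (hf : IsProperColoring G f) (a b : Fin 4) (hab : a ≠ b)
    (hne : {v | f v = a ∨ f v = b}.Nonempty) :
    ({P : Set (Set V) | ∃ W, IsChainUnion G f a b W ∧ P = colPart (kempeChange f a b W)}
        \ {colPart f}).ncard = 2 ^ (kempeCount G f a b - 1) - 1 :=
  kempe_change_partitions_card_general G f a b hab hne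
end

section
/- For every integer k ≥ 0, the 4-coloring complex B(Q_k) has exactly 2^k + 1 connected components. -/
/-- Generating relation for the triangulation `Q_k`.  The vertex `(i, 0)` is `a_i`,
`(i, 1)` is `b_i`, `(i, 2)` is `c_i` and `(i, 3)` is `d_i`.  Edges: the 4-cycles
`a_i b_i c_i d_i`, connecting edges between consecutive cycles, and the chords
`a_0 c_0` and `a_{k+1} c_{k+1}`. -/
def qkRel (k : ℕ) (u v : Fin (k + 2) × Fin 4) : Prop :=
  (u.1 = v.1 ∧ v.2 = u.2 + 1) ∨
  ((v.1 : ℕ) = (u.1 : ℕ) + 1 ∧ (v.2 = u.2 ∨ v.2 = u.2 + 1)) ∨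
  ((u.1 : ℕ) = 0 ∧ (v.1 : ℕ) = 0 ∧ u.2 = 0 ∧ v.2 = 2) ∨
  ((u.1 : ℕ) = k + 1 ∧ (v.1 : ℕ) = k + 1 ∧ u.2 = 0 ∧ v.2 = 2)

/-- The triangulation `Q_k`. -/
def Qk (k : ℕ) : SimpleGraph (Fin (k + 2) × Fin 4) := SimpleGraph.fromRel (qkRel k)

/-!
Cut `Q_k` into the 4-cycles `{i} × Fin 4` (layers). In a proper coloring, a color used exactly
once on a layer is used exactly once on the next one, so either every layer is rainbow or none is,
and the class of a color used once on layer `0` (such as `f (0, 0)`, because of the chord `a₀c₀`)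
is a diagonal `{(i, p i)}` whose steps `p i - p (i + 1)` lie in `{1, 2}`.

In a rainbow coloring consecutive layers differ by a rotation, so the four classes are exactly the
diagonals with one common step sequence. In a coloring without rainbow layers the chords force a
diagonal class to start and end at even positions, so its steps have even total. Hence the
parities of the steps of a diagonal class with odd total, and `none` for every other class, are
constant on components of `B(Q_k)`, and two classes with the same parity vector are classes of one
rainbow coloring. Every other class is joined to the class of `f (0, 0)`, a diagonal with even
ends, and any two such diagonals are linked through the explicit colorings `degColoring`. The
components thus correspond to `none` and to the `2^k` vectors in `(ZMod 2)^(k+1)` with odd sum.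
-/

theorem Fin.sum_univ_castSucc_sub_succ {M : Type*} [AddCommGroup M] {n : ℕ}
    (g : Fin (n + 1) → M) :
    ∑ i : Fin n, (g i.castSucc - g i.succ) = g 0 - g (Fin.last n) := by
  rw [Finset.sum_sub_distrib, sub_eq_sub_iff_add_eq_add]
  exact (Fin.sum_univ_castSucc g).symm.trans (Fin.sum_univ_succ g)

def Fin.sumEqEquiv {G : Type*} [AddCommGroup G] (n : ℕ) (c : G) :
    {b : Fin (n + 1) → G // ∑ i, b i = c} ≃ (Fin n → G) where
  toFun b := Fin.init b.1
  invFun g := ⟨Fin.snoc g (c - ∑ i, g i), by simp [Fin.sum_univ_castSucc]⟩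
  left_inv := by
    rintro ⟨b, rfl⟩
    refine Subtype.ext ?_
    simp only [Fin.sum_univ_castSucc b, Fin.init, add_sub_cancel_left]
    exact Fin.snoc_init_self b
  right_inv g := Fin.init_snoc _ _

section ColorComplex

variable {V : Type*} {G : SimpleGraph V}

theorem mem_colorClasses {f : V → Fin 4} (hf : IsProperColoring G f) {c : Fin 4}
    (hc : (f ⁻¹' {c}).Nonempty) : f ⁻¹' {c} ∈ colorClasses G :=
  ⟨hc, f, c, hf, rfl⟩

theorem colorComplex_reachable_of_preimage {A B : colorClasses G} {f : V → Fin 4}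
    (hf : IsProperColoring G f) {c c' : Fin 4} (hA : (A : Set V) = f ⁻¹' {c})
    (hB : (B : Set V) = f ⁻¹' {c'}) : (colorComplex G).Reachable A B := by
  by_cases h : A = B
  · exact h ▸ SimpleGraph.Reachable.refl A
  · exact SimpleGraph.Adj.reachable
      ((SimpleGraph.fromRel_adj _ _ _).2 ⟨h, Or.inl ⟨f, hf, ⟨c, hA⟩, ⟨c', hB⟩⟩⟩)

theorem eq_of_colorComplex_reachable {α : Type*} (φ : Set V → α)
    (hφ : ∀ f, IsProperColoring G f → ∀ c c', φ (f ⁻¹' {c}) = φ (f ⁻¹' {c'}))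
    {A B : colorClasses G} (h : (colorComplex G).Reachable A B) : φ A = φ B := by
  obtain ⟨w⟩ := h
  induction w with
  | nil => rfl
  | cons hadj _ ih =>
    rw [← ih]
    obtain ⟨-, ⟨f, hf, ⟨c, hc⟩, ⟨c', hc'⟩⟩ | ⟨f, hf, ⟨c, hc⟩, ⟨c', hc'⟩⟩⟩ :=
      (SimpleGraph.fromRel_adj _ _ _).1 hadj
    all_goals rw [hc, hc', hφ f hf]

end ColorComplex

namespace Qk

/-! A function `a : Fin 4 → Fin 4` stands for the coloring `j ↦ f (i, j)` of one layer. -/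

def IsCycleColoring (a : Fin 4 → Fin 4) : Prop := ∀ j, a (j + 1) ≠ a j

/-- `a` and `b` color two consecutive layers; vertex `j` of the lower layer is joined to the
vertices `j` and `j + 1` of the upper one. -/
def IsBand (a b : Fin 4 → Fin 4) : Prop := ∀ j, b j ≠ a j ∧ b (j + 1) ≠ a j

def IsTwoColored (a : Fin 4 → Fin 4) : Prop := a 0 = a 2 ∧ a 1 = a 3

instance : DecidablePred IsCycleColoring := fun _ => by unfold IsCycleColoring; infer_instance

instance (a b : Fin 4 → Fin 4) : Decidable (IsBand a b) := by unfold IsBand; infer_instance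

instance : DecidablePred IsTwoColored := fun _ => by unfold IsTwoColored; infer_instance

instance {p : Fin 4 → Prop} [DecidablePred p] : Decidable (∃! j, p j) :=
  decidable_of_iff (∃ j, p j ∧ ∀ y, p y → y = j) Iff.rfl

def parity : Fin 4 →+ ZMod 2 where
  toFun x := (x : ℕ)
  map_zero' := rfl
  map_add' := by decide

section Layer

variable {a b : Fin 4 → Fin 4}

theorem IsBand.isTwoColored_of_right (hab : IsBand a b) (ha : IsCycleColoring a)
    (hb : IsCycleColoring b) (h : IsTwoColored b) : IsTwoColored a := by
  revert hab h hb b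
  revert ha a
  decide +kernel

theorem IsBand.existsUnique_iff (hab : IsBand a b) (ha : IsCycleColoring a)
    (hb : IsCycleColoring b) (h : ¬ IsTwoColored a) (c : Fin 4) :
    (∃! j, a j = c) ↔ ∃! j, b j = c := by
  revert c hab hb b
  revert h ha a
  decide +kernel

theorem IsBand.exists_rotate (hab : IsBand a b) (ha : Function.Injective a)
    (hb : IsCycleColoring b) : ∃ s, ∀ j, b j = a (j + s) := by
  revert hab hb b
  revert ha a
  decide +kernel

theorem IsCycleColoring.existsUnique_eq_apply_zero (ha : IsCycleColoring a) (h : a 0 ≠ a 2) :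
    ∃! j, a j = a 0 := by
  revert h ha a
  decide +kernel

/-- Here `a 1 = a 3`, so a color used once sits at `0` or `2`. -/
theorem IsCycleColoring.parity_eq_zero_of_unique (ha : IsCycleColoring a)
    (hinj : ¬ Function.Injective a) (h : a 0 ≠ a 2) {j : Fin 4}
    (hj : ∀ j', a j' = a j → j' = j) : parity j = 0 := by
  revert hj j h hinj ha a
  decide +kernel

end Layer

variable {k : ℕ}

theorem isProperColoring_iff {f : Fin (k + 2) × Fin 4 → Fin 4} :
    IsProperColoring (Qk k) f ↔
      (∀ i, IsCycleColoring (Function.curry f i)) ∧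
      (∀ i : Fin (k + 1), IsBand (Function.curry f i.castSucc) (Function.curry f i.succ)) ∧
      f (0, 0) ≠ f (0, 2) ∧ f (Fin.last _, 0) ≠ f (Fin.last _, 2) := by
  constructor
  · intro hf
    have hadj : ∀ u v, u ≠ v → qkRel k u v → f v ≠ f u := fun u v hne h =>
      (hf ((SimpleGraph.fromRel_adj _ u v).2 ⟨hne, Or.inl h⟩)).symm
    have hcs : ∀ i : Fin (k + 1), i.castSucc ≠ i.succ := fun _ => Fin.castSucc_lt_succ.ne
    refine ⟨fun i j => hadj _ _ (by simp) (Or.inl ⟨rfl, rfl⟩), fun i j => ⟨?_, ?_⟩, ?_, ?_⟩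
    · exact hadj _ _ (by simp [hcs]) (Or.inr (Or.inl ⟨by simp, Or.inl rfl⟩))
    · exact hadj _ _ (by simp [hcs]) (Or.inr (Or.inl ⟨by simp, Or.inr rfl⟩))
    · exact (hadj _ _ (by simp [Prod.ext_iff])
        (Or.inr (Or.inr (Or.inl ⟨rfl, rfl, rfl, rfl⟩)))).symm
    · exact (hadj _ _ (by simp [Prod.ext_iff])
        (Or.inr (Or.inr (Or.inr ⟨rfl, rfl, rfl, rfl⟩)))).symm
  · rintro ⟨hcyc, hband, h0, hl⟩
    have hrel : ∀ u v, qkRel k u v → f u ≠ f v := by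
      rintro ⟨i, j⟩ ⟨i', j'⟩ h
      dsimp only [qkRel] at h
      rcases h with ⟨rfl, rfl⟩ | ⟨hi, hj⟩ | ⟨hi, hi', rfl, rfl⟩ | ⟨hi, hi', rfl, rfl⟩
      · exact (hcyc i j).symm
      · obtain ⟨m, rfl, rfl⟩ : ∃ m : Fin (k + 1), i = m.castSucc ∧ i' = m.succ :=
          ⟨⟨i, by omega⟩, rfl, Fin.ext (by simp [hi])⟩
        rcases hj with rfl | rfl
        exacts [(hband m _).1.symm, (hband m _).2.symm]
      · obtain ⟨rfl, rfl⟩ : i = 0 ∧ i' = 0 := ⟨Fin.ext hi, Fin.ext hi'⟩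
        exact h0
      · obtain ⟨rfl, rfl⟩ : i = Fin.last _ ∧ i' = Fin.last _ := ⟨Fin.ext hi, Fin.ext hi'⟩
        exact hl
    intro u v huv
    obtain ⟨-, h | h⟩ := (SimpleGraph.fromRel_adj _ u v).1 huv
    · exact hrel u v h
    · exact (hrel v u h).symm

def diagonal (p : Fin (k + 2) → Fin 4) : Set (Fin (k + 2) × Fin 4) := {v | v.2 = p v.1}

@[simp]
theorem mem_diagonal {p : Fin (k + 2) → Fin 4} {v : Fin (k + 2) × Fin 4} :
    v ∈ diagonal p ↔ v.2 = p v.1 := Iff.rfl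

theorem diagonal_injective : Function.Injective (diagonal (k := k)) := fun p q h =>
  funext fun i => (h ▸ (rfl : (i, p i) ∈ diagonal p) : (i, p i) ∈ diagonal q)

def steps (p : Fin (k + 2) → Fin 4) (i : Fin (k + 1)) : Fin 4 := p i.castSucc - p i.succ

/-- `diagonal p` is an independent set of `Q_k` exactly when `IsStaircase p`. -/
def IsStaircase (p : Fin (k + 2) → Fin 4) : Prop := ∀ i, steps p i = 1 ∨ steps p i = 2

abbrev OddVec (k : ℕ) := {b : Fin (k + 1) → ZMod 2 // ∑ i, b i = 1}

theorem card_oddVec : Nat.card (OddVec k) = 2 ^ k := by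
  rw [Nat.card_congr (Fin.sumEqEquiv k 1), Nat.card_fun, Nat.card_zmod, Nat.card_fin]

def stepShape (d : Fin (k + 1) → Fin 4) : Option (OddVec k) :=
  if h : ∑ i, parity (d i) = 1 then some ⟨fun i => parity (d i), h⟩ else none

open Classical in
noncomputable def classShape (S : Set (Fin (k + 2) × Fin 4)) : Option (OddVec k) :=
  if h : ∃ p, S = diagonal p then stepShape (steps h.choose) else none

theorem classShape_diagonal (p : Fin (k + 2) → Fin 4) :
    classShape (diagonal p) = stepShape (steps p) := by
  have h : ∃ q, diagonal p = diagonal q := ⟨p, rfl⟩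
  rw [classShape, dif_pos h, ← diagonal_injective h.choose_spec]

theorem stepShape_steps_eq_none_iff (p : Fin (k + 2) → Fin 4) :
    stepShape (steps p) = none ↔ parity (p 0) = parity (p (Fin.last _)) := by
  have key : ∀ x y : ZMod 2, x - y = 1 ↔ x ≠ y := by decide
  have hsum : ∑ i, parity (steps p i) = parity (p 0) - parity (p (Fin.last _)) := by
    simp only [steps, map_sub]
    exact Fin.sum_univ_castSucc_sub_succ (parity ∘ p)
  unfold stepShape
  split_ifs with h
  · simpa using (key _ _).1 (hsum ▸ h)
  · simpa using (key _ _).not.1 (hsum ▸ h)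

theorem steps_eq_of_stepShape_eq {p q : Fin (k + 2) → Fin 4} {b : OddVec k}
    (hp : IsStaircase p) (hq : IsStaircase q) (hpb : stepShape (steps p) = some b)
    (hqb : stepShape (steps q) = some b) : steps p = steps q := by
  have key : ∀ x y : Fin 4, (x = 1 ∨ x = 2) → (y = 1 ∨ y = 2) → parity x = parity y → x = y :=
    by decide
  unfold stepShape at hpb hqb
  split_ifs at hpb hqb
  have := congrArg Subtype.val (Option.some_injective _ (hpb.trans hqb.symm))
  exact funext fun i => key _ _ (hp i) (hq i) (congrFun this i)

section ProperColoring

variable {f : Fin (k + 2) × Fin 4 → Fin 4} {c : Fin 4} {p : Fin (k + 2) → Fin 4}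

theorem not_isTwoColored (hf : IsProperColoring (Qk k) f) (i : Fin (k + 2)) :
    ¬ IsTwoColored (Function.curry f i) := by
  obtain ⟨hcyc, hband, h0, -⟩ := isProperColoring_iff.1 hf
  induction i using Fin.induction with
  | zero => exact fun h => h0 h.1
  | succ i ih => exact fun h => ih ((hband i).isTwoColored_of_right (hcyc _) (hcyc _) h)

theorem existsUnique_iff (hf : IsProperColoring (Qk k) f) (i : Fin (k + 2)) (c : Fin 4) :
    (∃! j, f (i, j) = c) ↔ ∃! j, f (0, j) = c := by
  obtain ⟨hcyc, hband, -⟩ := isProperColoring_iff.1 hf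
  induction i using Fin.induction with
  | zero => rfl
  | succ i ih =>
    exact ((hband i).existsUnique_iff (hcyc _) (hcyc _) (not_isTwoColored hf _) c).symm.trans ih

theorem injective_curry_iff (hf : IsProperColoring (Qk k) f) (i : Fin (k + 2)) :
    Function.Injective (Function.curry f i) ↔ Function.Injective (Function.curry f 0) := by
  simp only [Finite.injective_iff_bijective, Function.bijective_iff_existsUnique]
  exact forall_congr' (existsUnique_iff hf i)

theorem apply_eq_of_preimage_eq_diagonal (hp : f ⁻¹' {c} = diagonal p) (i : Fin (k + 2)) :
    f (i, p i) = c :=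
  (hp ▸ (rfl : (i, p i) ∈ diagonal p) : (i, p i) ∈ f ⁻¹' {c})

theorem exists_preimage_eq_diagonal (hf : IsProperColoring (Qk k) f)
    (hc : ∃! j, f (0, j) = c) : ∃ p, f ⁻¹' {c} = diagonal p := by
  choose p hp using fun i => (existsUnique_iff hf i c).2 hc
  exact ⟨p, Set.ext fun ⟨i, j⟩ => ⟨(hp i).2 j, fun (h : j = p i) => h ▸ (hp i).1⟩⟩

theorem isStaircase_of_preimage_eq_diagonal (hf : IsProperColoring (Qk k) f)
    (hp : f ⁻¹' {c} = diagonal p) : IsStaircase p := by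
  obtain ⟨-, hband, -⟩ := isProperColoring_iff.1 hf
  have key : ∀ x y : Fin 4, y ≠ x → y ≠ x + 1 → x - y = 1 ∨ x - y = 2 := by decide
  intro i
  have hc := apply_eq_of_preimage_eq_diagonal hp
  exact key _ _ (fun h => (hband i _).1 ((h ▸ hc i.succ).trans (hc _).symm))
    (fun h => (hband i _).2 ((h ▸ hc i.succ).trans (hc _).symm))

/-- Consecutive rainbow layers differ by a rotation. -/
theorem exists_steps_of_injective (hf : IsProperColoring (Qk k) f)
    (h0 : Function.Injective (Function.curry f 0)) :
    ∃ s, ∀ S, (∃ c, S = f ⁻¹' {c}) ↔ ∃ q, S = diagonal q ∧ steps q = s := by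
  obtain ⟨hcyc, hband, -⟩ := isProperColoring_iff.1 hf
  have hinj i : Function.Injective (Function.curry f i) := (injective_curry_iff hf i).2 h0
  choose s hs using fun i : Fin (k + 1) => (hband i).exists_rotate (hinj _) (hcyc _)
  refine ⟨s, fun S => ⟨?_, ?_⟩⟩
  · rintro ⟨c, rfl⟩
    obtain ⟨q, hq⟩ :=
      exists_preimage_eq_diagonal hf ((Finite.injective_iff_bijective.1 h0).existsUnique c)
    have hc := apply_eq_of_preimage_eq_diagonal hq
    refine ⟨q, hq, funext fun i => ?_⟩
    have : q i.succ + s i = q i.castSucc :=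
      hinj _ (((hs i _).symm.trans (hc _)).trans (hc _).symm)
    rw [steps, ← this, add_sub_cancel_left]
  · rintro ⟨q, rfl, rfl⟩
    have hconst : ∀ i, f (i, q i) = f (0, q 0) := by
      intro i
      induction i using Fin.induction with
      | zero => rfl
      | succ i ih => rw [← ih]; exact (hs i _).trans (by simp [steps])
    refine ⟨f (0, q 0), Set.ext fun v => ?_⟩
    rw [mem_diagonal, Set.mem_preimage, Set.mem_singleton_iff, ← hconst v.1]
    exact ⟨fun h => h ▸ rfl, fun h => hinj v.1 h⟩

theorem parity_eq_zero_of_not_injective (hf : IsProperColoring (Qk k) f) {i : Fin (k + 2)}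
    (hi : ¬ Function.Injective (Function.curry f i)) (hchord : f (i, 0) ≠ f (i, 2))
    (hp : f ⁻¹' {c} = diagonal p) : parity (p i) = 0 := by
  refine ((isProperColoring_iff.1 hf).1 i).parity_eq_zero_of_unique hi hchord fun j h => ?_
  have : (i, j) ∈ f ⁻¹' {c} := h.trans (apply_eq_of_preimage_eq_diagonal hp i)
  rwa [hp] at this

theorem classShape_preimage_of_not_injective (hf : IsProperColoring (Qk k) f)
    (h0 : ¬ Function.Injective (Function.curry f 0)) (c : Fin 4) :
    classShape (f ⁻¹' {c}) = none := by
  obtain ⟨-, -, h00, hll⟩ := isProperColoring_iff.1 hf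
  by_cases hS : ∃ p, f ⁻¹' {c} = diagonal p
  · obtain ⟨p, hp⟩ := hS
    have hl := mt (injective_curry_iff hf (Fin.last _)).1 h0
    rw [hp, classShape_diagonal, stepShape_steps_eq_none_iff,
      parity_eq_zero_of_not_injective hf h0 h00 hp, parity_eq_zero_of_not_injective hf hl hll hp]
  · rw [classShape, dif_neg hS]

theorem classShape_preimage_eq (hf : IsProperColoring (Qk k) f) (c c' : Fin 4) :
    classShape (f ⁻¹' {c}) = classShape (f ⁻¹' {c'}) := by
  by_cases h0 : Function.Injective (Function.curry f 0)
  · obtain ⟨s, hs⟩ := exists_steps_of_injective hf h0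
    have key c : classShape (f ⁻¹' {c}) = stepShape s := by
      obtain ⟨q, hq, rfl⟩ := (hs _).1 ⟨c, rfl⟩
      rw [hq, classShape_diagonal]
    rw [key, key]
  · rw [classShape_preimage_of_not_injective hf h0, classShape_preimage_of_not_injective hf h0]

end ProperColoring

def pathOf (d : Fin (k + 1) → Fin 4) : Fin (k + 2) → Fin 4 :=
  Fin.induction 0 fun i x => x - d i

theorem pathOf_zero (d : Fin (k + 1) → Fin 4) : pathOf d 0 = 0 := rfl

theorem steps_pathOf (d : Fin (k + 1) → Fin 4) : steps (pathOf d) = d :=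
  funext fun i => by simp [steps, pathOf, Fin.induction_succ]

def stepOfParity (b : ZMod 2) : Fin 4 := if b = 1 then 1 else 2

theorem parity_stepOfParity (b : ZMod 2) : parity (stepOfParity b) = b := by
  revert b; decide

theorem stepOfParity_eq_one_or_two (b : ZMod 2) : stepOfParity b = 1 ∨ stepOfParity b = 2 := by
  revert b; decide

theorem isStaircase_pathOf_stepOfParity (b : Fin (k + 1) → ZMod 2) :
    IsStaircase (pathOf fun i => stepOfParity (b i)) := fun i => by
  rw [steps_pathOf]; exact stepOfParity_eq_one_or_two _

theorem exists_isStaircase_parity (π : Fin (k + 2) → ZMod 2) (h0 : π 0 = 0) :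
    ∃ r, IsStaircase r ∧ ∀ i, parity (r i) = π i := by
  refine ⟨_, isStaircase_pathOf_stepOfParity fun i => π i.castSucc - π i.succ, fun i => ?_⟩
  induction i using Fin.induction with
  | zero => rw [pathOf_zero, map_zero, h0]
  | succ i ih =>
    have := congrFun (steps_pathOf fun i => stepOfParity (π i.castSucc - π i.succ)) i
    rw [steps, sub_eq_iff_eq_add', ← sub_eq_iff_eq_add] at this
    rw [← this, map_sub, ih, parity_stepOfParity, sub_sub_cancel]

def rotColoring (p : Fin (k + 2) → Fin 4) (v : Fin (k + 2) × Fin 4) : Fin 4 := v.2 - p v.1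

theorem isProperColoring_rotColoring {p : Fin (k + 2) → Fin 4} (hp : IsStaircase p) :
    IsProperColoring (Qk k) (rotColoring p) := by
  have hcyc : ∀ x j : Fin 4, j + 1 - x ≠ j - x := by decide
  have hband : ∀ x y j : Fin 4, (x - y = 1 ∨ x - y = 2) → j - y ≠ j - x ∧ j + 1 - y ≠ j - x :=
    by decide
  have hchord : ∀ x : Fin 4, 0 - x ≠ 2 - x := by decide
  exact isProperColoring_iff.2
    ⟨fun i j => hcyc _ j, fun i j => hband _ _ j (hp i), hchord _, hchord _⟩

theorem rotColoring_preimage_zero (p : Fin (k + 2) → Fin 4) :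
    rotColoring p ⁻¹' {0} = diagonal p :=
  Set.ext fun _ => sub_eq_zero

def IsEvenStaircase (p : Fin (k + 2) → Fin 4) : Prop :=
  IsStaircase p ∧ parity (p 0) = 0 ∧ parity (p (Fin.last _)) = 0

def degLayer (x r j : Fin 4) : Fin 4 :=
  if parity j = parity x then (if j = x then 0 else 2) else r

def degColoring (p : Fin (k + 2) → Fin 4) (v : Fin (k + 2) × Fin 4) : Fin 4 :=
  degLayer (p v.1) (if Even (v.1 : ℕ) then 1 else 3) v.2

theorem isProperColoring_degColoring {p : Fin (k + 2) → Fin 4} (hp : IsEvenStaircase p) :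
    IsProperColoring (Qk k) (degColoring p) := by
  have hcyc : ∀ x r j : Fin 4, (r = 1 ∨ r = 3) → degLayer x r (j + 1) ≠ degLayer x r j := by
    decide
  have hband : ∀ x y r r' j : Fin 4, (x - y = 1 ∨ x - y = 2) → (r = 1 ∨ r = 3) →
      (r' = 1 ∨ r' = 3) → r' ≠ r →
      degLayer y r' j ≠ degLayer x r j ∧ degLayer y r' (j + 1) ≠ degLayer x r j := by
    decide
  have hchord : ∀ x r : Fin 4, parity x = 0 → (r = 1 ∨ r = 3) →
      degLayer x r 0 ≠ degLayer x r 2 := by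
    decide
  have hr (n : ℕ) : (if Even n then 1 else 3 : Fin 4) = 1 ∨ (if Even n then 1 else 3 : Fin 4) = 3 :=
    by split_ifs <;> simp
  refine isProperColoring_iff.2 ⟨fun i j => hcyc _ _ j (hr _),
    fun i j => hband _ _ _ _ j (hp.1 i) (hr _) (hr _) ?_,
    hchord _ _ hp.2.1 (hr _), hchord _ _ hp.2.2 (hr _)⟩
  by_cases h : Even (i : ℕ) <;> simp [h, Nat.even_add_one]

theorem degColoring_preimage_zero (p : Fin (k + 2) → Fin 4) :
    degColoring p ⁻¹' {0} = diagonal p := by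
  have key : ∀ x r j : Fin 4, (r = 1 ∨ r = 3) → (degLayer x r j = 0 ↔ j = x) := by decide
  ext ⟨i, j⟩
  exact key _ _ _ (by split_ifs <;> simp)

theorem degColoring_preimage_one (p : Fin (k + 2) → Fin 4) :
    degColoring p ⁻¹' {1} = {v | Even (v.1 : ℕ) ∧ parity v.2 ≠ parity (p v.1)} := by
  have key : ∀ x r j : Fin 4, (degLayer x r j = 1 ↔ r = 1 ∧ parity j ≠ parity x) := by decide
  ext ⟨i, j⟩
  simp only [Set.mem_preimage, Set.mem_singleton_iff, degColoring, key, Set.mem_ofPred_eq]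
  split_ifs <;> simp [*]

theorem degColoring_preimage_three (p : Fin (k + 2) → Fin 4) :
    degColoring p ⁻¹' {3} = {v | ¬ Even (v.1 : ℕ) ∧ parity v.2 ≠ parity (p v.1)} := by
  have key : ∀ x r j : Fin 4, (degLayer x r j = 3 ↔ r = 3 ∧ parity j ≠ parity x) := by decide
  ext ⟨i, j⟩
  simp only [Set.mem_preimage, Set.mem_singleton_iff, degColoring, key, Set.mem_ofPred_eq]
  split_ifs <;> simp [*]

/-- Any two diagonals of even staircases lie in one component: the class of color `1` of
`degColoring p` is also that of `degColoring r` when `r` follows `p` on even layers, and its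
class of color `3` is that of `degColoring q` when `r` follows `q` on odd layers. -/
theorem reachable_of_isEvenStaircase {X Y : colorClasses (Qk k)} {p q : Fin (k + 2) → Fin 4}
    (hp : IsEvenStaircase p) (hq : IsEvenStaircase q) (hX : X.1 = diagonal p)
    (hY : Y.1 = diagonal q) : (colorComplex (Qk k)).Reachable X Y := by
  obtain ⟨r, hr, hpar⟩ := exists_isStaircase_parity
    (fun i => if Even (i : ℕ) then parity (p i) else parity (q i)) (by simpa using hp.2.1)
  have hr' : IsEvenStaircase r := by
    refine ⟨hr, by simpa [hpar] using hp.2.1, ?_⟩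
    rw [hpar]
    split_ifs
    exacts [hp.2.2, hq.2.2]
  have hE : degColoring p ⁻¹' {1} = degColoring r ⁻¹' {1} := by
    simp only [degColoring_preimage_one]
    ext ⟨i, j⟩
    by_cases he : Even (i : ℕ) <;> simp [he, hpar]
  have hO : degColoring q ⁻¹' {3} = degColoring r ⁻¹' {3} := by
    simp only [degColoring_preimage_three]
    ext ⟨i, j⟩
    by_cases he : Even (i : ℕ) <;> simp [he, hpar]
  have hne : parity 1 ≠ 0 := by decide
  let E : colorClasses (Qk k) := ⟨_, mem_colorClasses (isProperColoring_degColoring hp)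
    (c := 1) ⟨(0, p 0 + 1), by simp [degColoring_preimage_one, hne]⟩⟩
  let O : colorClasses (Qk k) := ⟨_, mem_colorClasses (isProperColoring_degColoring hq)
    (c := 3) ⟨(1, q 1 + 1), by simp [degColoring_preimage_three, hne]⟩⟩
  have hXE : (colorComplex (Qk k)).Reachable X E := colorComplex_reachable_of_preimage
    (isProperColoring_degColoring hp) (hX.trans (degColoring_preimage_zero p).symm) rfl
  have hEO : (colorComplex (Qk k)).Reachable E O :=
    colorComplex_reachable_of_preimage (isProperColoring_degColoring hr') hE hO
  have hOY : (colorComplex (Qk k)).Reachable O Y := colorComplex_reachable_of_preimage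
    (isProperColoring_degColoring hq) rfl (hY.trans (degColoring_preimage_zero q).symm)
  exact (hXE.trans hEO).trans hOY

/-- The class of `f (0, 0)` is a diagonal; it has the same `classShape` as the other classes
of `f`, hence even ends. -/
theorem exists_reachable_isEvenStaircase {A : colorClasses (Qk k)}
    (hA : classShape A.1 = none) :
    ∃ X : colorClasses (Qk k), (colorComplex (Qk k)).Reachable A X ∧
      ∃ r, IsEvenStaircase r ∧ X.1 = diagonal r := by
  obtain ⟨-, f, c, hf, hAc⟩ := A.2
  obtain ⟨hcyc, -, h00, -⟩ := isProperColoring_iff.1 hf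
  have huniq := (hcyc 0).existsUnique_eq_apply_zero h00
  obtain ⟨r, hr⟩ := exists_preimage_eq_diagonal hf huniq
  have hr0 : r 0 = 0 := huniq.unique (apply_eq_of_preimage_eq_diagonal hr 0) rfl
  have hshape : stepShape (steps r) = none := by
    rw [← classShape_diagonal, ← hr, classShape_preimage_eq hf _ c, ← hAc, hA]
  rw [stepShape_steps_eq_none_iff, hr0, map_zero] at hshape
  exact ⟨⟨_, mem_colorClasses hf ⟨(0, 0), rfl⟩⟩, colorComplex_reachable_of_preimage hf hAc rfl,
    r, ⟨isStaircase_of_preimage_eq_diagonal hf hr, by rw [hr0, map_zero], hshape.symm⟩, hr⟩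

theorem reachable_of_classShape_eq_none {A B : colorClasses (Qk k)}
    (hA : classShape A.1 = none) (hB : classShape B.1 = none) :
    (colorComplex (Qk k)).Reachable A B := by
  obtain ⟨X, hAX, p, hp, hX⟩ := exists_reachable_isEvenStaircase hA
  obtain ⟨Y, hBY, q, hq, hY⟩ := exists_reachable_isEvenStaircase hB
  exact (hAX.trans (reachable_of_isEvenStaircase hp hq hX hY)).trans hBY.symm

/-- Classes with the same `classShape` are classes of a common rainbow coloring. -/
theorem reachable_of_classShape_eq_some {A B : colorClasses (Qk k)} {b : OddVec k}
    (hA : classShape A.1 = some b) (hB : classShape B.1 = some b) :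
    (colorComplex (Qk k)).Reachable A B := by
  obtain ⟨-, f, c, hf, hAc⟩ := A.2
  obtain ⟨-, g, c', hg, hBc⟩ := B.2
  have hf0 : Function.Injective (Function.curry f 0) := by
    by_contra h
    rw [hAc, classShape_preimage_of_not_injective hf h] at hA
    cases hA
  have hg0 : Function.Injective (Function.curry g 0) := by
    by_contra h
    rw [hBc, classShape_preimage_of_not_injective hg h] at hB
    cases hB
  obtain ⟨s, hs⟩ := exists_steps_of_injective hf hf0
  obtain ⟨s', hs'⟩ := exists_steps_of_injective hg hg0
  obtain ⟨p, hp, rfl⟩ := (hs _).1 ⟨c, hAc⟩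
  obtain ⟨q, hq, -⟩ := (hs' _).1 ⟨c', hBc⟩
  rw [hp, classShape_diagonal] at hA
  rw [hq, classShape_diagonal] at hB
  have hpq : steps q = steps p := steps_eq_of_stepShape_eq
    (isStaircase_of_preimage_eq_diagonal hg (hBc.symm.trans hq))
    (isStaircase_of_preimage_eq_diagonal hf (hAc.symm.trans hp)) hB hA
  obtain ⟨c'', hc''⟩ := (hs _).2 ⟨q, hq, hpq⟩
  exact colorComplex_reachable_of_preimage hf hAc hc''

noncomputable def componentShape :
    (colorComplex (Qk k)).ConnectedComponent → Option (OddVec k) :=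
  SimpleGraph.ConnectedComponent.lift (fun A => classShape A.1) fun _ _ w _ =>
    eq_of_colorComplex_reachable _ (fun _ hf => classShape_preimage_eq hf) w.reachable

theorem componentShape_injective : Function.Injective (componentShape (k := k)) := by
  refine SimpleGraph.ConnectedComponent.ind₂ fun A B h => SimpleGraph.ConnectedComponent.sound ?_
  change classShape A.1 = classShape B.1 at h
  cases hA : classShape A.1 with
  | none => exact reachable_of_classShape_eq_none hA (h.symm.trans hA)
  | some b => exact reachable_of_classShape_eq_some hA (h.symm.trans hA)

theorem componentShape_surjective : Function.Surjective (componentShape (k := k)) := by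
  have key {r : Fin (k + 2) → Fin 4} (hr : IsStaircase r) :
      ∃ C, componentShape C = stepShape (steps r) := by
    have hA : rotColoring r ⁻¹' {0} ∈ colorClasses (Qk k) :=
      mem_colorClasses (isProperColoring_rotColoring hr) (by
        rw [rotColoring_preimage_zero]; exact ⟨(0, r 0), rfl⟩)
    exact ⟨(colorComplex (Qk k)).connectedComponentMk ⟨_, hA⟩,
      (congrArg classShape (rotColoring_preimage_zero r)).trans (classShape_diagonal r)⟩
  rintro (_ | b)
  · obtain ⟨r, hr, hpar⟩ := exists_isStaircase_parity (k := k) 0 rfl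
    obtain ⟨C, hC⟩ := key hr
    refine ⟨C, hC.trans ((stepShape_steps_eq_none_iff r).2 ?_)⟩
    rw [hpar, hpar, Pi.zero_apply, Pi.zero_apply]
  · obtain ⟨C, hC⟩ := key (isStaircase_pathOf_stepOfParity b.1)
    refine ⟨C, hC.trans ?_⟩
    simp only [stepShape, steps_pathOf, parity_stepOfParity, b.2, dite_true]

end Qk

/-- The 4-coloring complex `B(Q_k)` has exactly `2^k + 1` connected components. -/
theorem card_components_colorComplex_Qk (k : ℕ) :
    Nat.card ((colorComplex (Qk k)).ConnectedComponent) = 2 ^ k + 1 := by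
  rw [Nat.card_eq_of_bijective _ ⟨Qk.componentShape_injective, Qk.componentShape_surjective⟩,
    Finite.card_option, Qk.card_oddVec]
end

section
/- For every integer k ≥ 0, the graph Q_k has exactly 3·2^k coloring-partitions; equivalently, Q_k has exactly 72·2^k proper 4-colorings f : V(Q_k) → Fin 4. -/
/-!
Cut `Q_k` into its `k + 2` layers, the 4-cycles `a_i b_i c_i d_i`. A proper coloring is then a
walk of length `k + 1` in the transfer relation `LayerStep` between proper colorings of `C_4`,
whose first and last layers also respect the chords (`a ≠ c`). The number of non-monochromatic
diagonals of a layer, `diagWeight`, is an eigenvector of the transfer relation for the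
eigenvalue `2` and counts the one-step extensions ending at a chord layer; summed over the
chord layers it is `72`, so `Q_k` has `72 · 2^k` proper colorings.

Since `a_0 b_0 c_0` is a triangle, every proper coloring uses at least three colors, so the
colorings with a given coloring-partition correspond to the injections of its `3` or `4`
classes into `Fin 4`: there are `24` of them.
-/

open Finset

section RelChain

variable {S : Type*} (R : S → S → Prop)

def IsRelChain {n : ℕ} (g : Fin (n + 1) → S) : Prop :=
  ∀ i : Fin n, R (g i.castSucc) (g i.succ)

instance [DecidableRel R] {n : ℕ} : DecidablePred (IsRelChain R (n := n)) :=
  fun _ => inferInstanceAs (Decidable (∀ _, _))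

variable {R} in
theorem isRelChain_cons {n : ℕ} (t : S) (g : Fin (n + 1) → S) :
    IsRelChain R (Fin.cons t g : Fin (n + 2) → S) ↔ R t (g 0) ∧ IsRelChain R g := by
  simp [IsRelChain, Fin.forall_fin_succ]

variable [Fintype S] [DecidableEq S] [DecidableRel R] (P : S → Prop) [DecidablePred P]

def chainsFrom (n : ℕ) (t : S) : Finset (Fin (n + 1) → S) :=
  {g | g 0 = t ∧ IsRelChain R g ∧ P (g (Fin.last n))}

theorem card_chainsFrom_zero (t : S) : #(chainsFrom R P 0 t) = if P t then 1 else 0 := by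
  split_ifs with h
  · rw [card_eq_one]
    refine ⟨fun _ => t, ?_⟩
    ext g
    simpa [chainsFrom, IsRelChain, funext_iff, Fin.forall_fin_one] using fun hg => hg ▸ h
  · simpa [chainsFrom, IsRelChain] using fun g hg => hg ▸ h

theorem card_chainsFrom_succ (n : ℕ) (t : S) :
    #(chainsFrom R P (n + 1) t) = ∑ s with R t s, #(chainsFrom R P n s) := by
  rw [← card_sigma]
  refine card_nbij' (fun g => ⟨g 1, Fin.tail g⟩) (fun p => Fin.cons t p.2) ?_ ?_ ?_ ?_
  · intro g hg
    simp only [chainsFrom, mem_coe, mem_filter, mem_univ, true_and] at hg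
    obtain ⟨rfl, hchain, hlast⟩ := hg
    rw [← Fin.cons_self_tail g, isRelChain_cons] at hchain
    simpa [chainsFrom, Fin.tail] using ⟨hchain.1, hchain.2, hlast⟩
  · rintro ⟨s, g⟩ hg
    simp only [chainsFrom, mem_coe, mem_sigma, mem_filter, mem_univ, true_and] at hg
    obtain ⟨hts, rfl, hchain, hlast⟩ := hg
    simpa [chainsFrom, isRelChain_cons] using ⟨⟨hts, hchain⟩, hlast⟩
  · intro g hg
    simp only [chainsFrom, mem_coe, mem_filter, mem_univ, true_and] at hg
    simp [← hg.1]
  · rintro ⟨s, g⟩ hg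
    simp only [chainsFrom, mem_coe, mem_sigma, mem_filter, mem_univ, true_and] at hg
    simp [hg.2.1]

theorem card_chainsFrom_eq_pow_mul (ψ : S → ℕ) (c : ℕ)
    (hP : ∀ t, #{s | R t s ∧ P s} = ψ t) (hψ : ∀ t, ∑ s with R t s, ψ s = c * ψ t)
    (n : ℕ) (t : S) : #(chainsFrom R P (n + 1) t) = c ^ n * ψ t := by
  induction n generalizing t with
  | zero => simp [card_chainsFrom_succ, card_chainsFrom_zero, ← hP, filter_filter]
  | succ n ih =>
    rw [card_chainsFrom_succ, sum_congr rfl fun s _ => ih s, ← mul_sum, hψ, pow_succ, mul_assoc]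

theorem card_chains_eq_sum (Q : S → Prop) [DecidablePred Q] (n : ℕ) :
    #{g : Fin (n + 1) → S | Q (g 0) ∧ IsRelChain R g ∧ P (g (Fin.last n))}
      = ∑ t with Q t, #(chainsFrom R P n t) := by
  rw [card_eq_sum_card_fiberwise (f := fun g => g 0) (t := {t | Q t})]
  · refine sum_congr rfl fun t ht => congrArg card ?_
    ext g
    simp only [chainsFrom, mem_filter, mem_univ, true_and] at ht ⊢
    constructor
    · rintro ⟨⟨-, h⟩, rfl⟩
      exact ⟨rfl, h⟩
    · rintro ⟨rfl, h⟩
      exact ⟨⟨ht, h⟩, rfl⟩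
  · intro g hg
    simp_all

end RelChain

theorem isProperColoring_fromRel_iff {V : Type*} {r : V → V → Prop} {f : V → Fin 4} :
    IsProperColoring (SimpleGraph.fromRel r) f ↔ ∀ u v, r u v → u ≠ v → f u ≠ f v := by
  refine ⟨fun hf u v huv hne => hf ((SimpleGraph.fromRel_adj ..).mpr ⟨hne, .inl huv⟩), ?_⟩
  rintro hf u v ⟨hne, huv | hvu⟩
  · exact hf u v huv hne
  · exact (hf v u hvu hne.symm).symm

theorem colPart_eq_classes_ker {V : Type*} (f : V → Fin 4) :
    colPart f = (Setoid.ker f).classes := by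
  ext A
  constructor
  · rintro ⟨⟨u, hu⟩, c, rfl⟩
    obtain rfl : f u = c := hu
    exact ⟨u, rfl⟩
  · rintro ⟨u, rfl⟩
    exact ⟨⟨u, rfl⟩, f u, rfl⟩

theorem colPart_eq_colPart_iff {V : Type*} {f g : V → Fin 4} :
    colPart f = colPart g ↔ Setoid.ker f = Setoid.ker g := by
  rw [colPart_eq_classes_ker, colPart_eq_classes_ker, Setoid.classes_inj]

theorem card_subtype_ker_eq {V β : Type*} [Fintype V] [Fintype β] (f : V → β) :
    Nat.card {g : V → β // Setoid.ker g = Setoid.ker f} =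
      (Nat.card β).descFactorial (Nat.card (Set.range f)) := by
  classical
  let e : {g : V → β // Setoid.ker g = Setoid.ker f} ≃ (Set.range f ↪ β) :=
    { toFun g := ⟨g.1 ∘ Set.rangeSplitting f, fun x y hxy => by
        have : f (Set.rangeSplitting f x) = f (Set.rangeSplitting f y) := by
          rw [← Setoid.ker_def, ← g.2]; exact hxy
        simpa [Set.apply_rangeSplitting, Subtype.ext_iff] using this⟩
      invFun e := ⟨e ∘ Set.rangeFactorization f, Setoid.ext fun u v => by
        simp [Setoid.ker_def, e.injective.eq_iff, Set.rangeFactorization, Subtype.ext_iff]⟩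
      left_inv g := Subtype.ext <| funext fun v => by
        show g.1 (Set.rangeSplitting f ⟨f v, _⟩) = g.1 v
        rw [← Setoid.ker_def, g.2, Setoid.ker_def, Set.apply_rangeSplitting f]
      right_inv e := by
        ext x
        exact congrArg e (Set.leftInverse_rangeSplitting f x) }
  rw [Nat.card_congr e, Nat.card_eq_fintype_card, Fintype.card_embedding_eq,
    Nat.card_eq_fintype_card, Nat.card_eq_fintype_card]

theorem IsProperColoring.of_ker_eq {V : Type*} {G : SimpleGraph V} {f g : V → Fin 4}
    (hf : IsProperColoring G f) (h : Setoid.ker g = Setoid.ker f) : IsProperColoring G g :=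
  fun u v huv hg => hf huv (by rwa [← Setoid.ker_def, ← h])

theorem IsProperColoring.three_le_card_range {V : Type*} [Finite V] {G : SimpleGraph V}
    {f : V → Fin 4} (hf : IsProperColoring G f) {u v w : V} (huv : G.Adj u v) (hvw : G.Adj v w)
    (huw : G.Adj u w) : 3 ≤ Nat.card (Set.range f) := by
  rw [Nat.card_coe_set_eq]
  calc 3 = ({f u, f v, f w} : Set (Fin 4)).ncard :=
        (Set.ncard_eq_three.mpr ⟨_, _, _, hf huv, hf huw, hf hvw, rfl⟩).symm
    _ ≤ (Set.range f).ncard :=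
        Set.ncard_le_ncard (by simp [Set.insert_subset_iff]) (Set.toFinite _)

theorem card_properColorings_eq_mul_ncard {V : Type*} [Fintype V] (G : SimpleGraph V)
    {u v w : V} (huv : G.Adj u v) (hvw : G.Adj v w) (huw : G.Adj u w) :
    Nat.card {f // IsProperColoring G f} = 24 * {P | IsColoringPartition G P}.ncard := by
  classical
  set C : Finset (V → Fin 4) := {f | IsProperColoring G f}
  have hfiber (f) (hf : f ∈ C) : #{g ∈ C | colPart g = colPart f} = 24 := by
    rw [mem_filter] at hf
    have hrange := hf.2.three_le_card_range huv hvw huw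
    have hfiber_eq :
        {g ∈ C | colPart g = colPart f} = ({g | Setoid.ker g = Setoid.ker f} : Finset _) := by
      ext g
      simp only [C, mem_filter, mem_univ, true_and, colPart_eq_colPart_iff]
      exact ⟨And.right, fun h => ⟨hf.2.of_ker_eq h, h⟩⟩
    rw [hfiber_eq, ← Fintype.card_subtype, ← Nat.card_eq_fintype_card, card_subtype_ker_eq,
      Nat.card_fin]
    have : Nat.card (Set.range f) ≤ 4 := by
      simpa using Nat.card_mono (Set.toFinite _) (Set.subset_univ (Set.range f))
    interval_cases Nat.card (Set.range f) <;> rfl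
  have hpart : {P | IsColoringPartition G P} = C.image colPart := by
    ext P
    simp [C, IsColoringPartition, eq_comm]
  rw [hpart, Set.ncard_coe_finset, Nat.card_eq_fintype_card, Fintype.card_subtype,
    card_eq_sum_card_image colPart C, sum_congr rfl fun P hP => ?_, sum_const, smul_eq_mul,
    mul_comm]
  obtain ⟨f, hf, rfl⟩ := mem_image.mp hP
  exact hfiber f hf

def IsCycleColoring (t : Fin 4 → Fin 4) : Prop := ∀ j, t j ≠ t (j + 1)

def LayerStep (t s : Fin 4 → Fin 4) : Prop :=
  IsCycleColoring t ∧ IsCycleColoring s ∧ ∀ j, s j ≠ t j ∧ s (j + 1) ≠ t j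

def HasChord (t : Fin 4 → Fin 4) : Prop := t 0 ≠ t 2

instance : DecidablePred IsCycleColoring := fun _ => inferInstanceAs (Decidable (∀ _, _))
instance : DecidableRel LayerStep := fun _ _ => inferInstanceAs (Decidable (_ ∧ _))
instance : DecidablePred HasChord := fun _ => inferInstanceAs (Decidable (¬_))

def diagWeight (t : Fin 4 → Fin 4) : ℕ :=
  if IsCycleColoring t then (if t 0 ≠ t 2 then 1 else 0) + (if t 1 ≠ t 3 then 1 else 0) else 0

theorem card_layerStep_hasChord (t : Fin 4 → Fin 4) :
    #{s | LayerStep t s ∧ HasChord s} = diagWeight t := by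
  revert t
  decide +kernel

theorem sum_layerStep_diagWeight (t : Fin 4 → Fin 4) :
    ∑ s with LayerStep t s, diagWeight s = 2 * diagWeight t := by
  revert t
  decide +kernel

theorem sum_hasChord_diagWeight : ∑ t with HasChord t, diagWeight t = 72 := by
  decide +kernel

theorem isProperColoring_Qk_iff {k : ℕ} (f : Fin (k + 2) × Fin 4 → Fin 4) :
    IsProperColoring (Qk k) f ↔
      HasChord (Function.curry f 0) ∧ IsRelChain LayerStep (Function.curry f) ∧
        HasChord (Function.curry f (Fin.last (k + 1))) := by
  rw [Qk, isProperColoring_fromRel_iff]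
  constructor
  · intro hf
    have hcycle (i : Fin (k + 2)) : IsCycleColoring (Function.curry f i) := fun j =>
      hf (i, j) (i, j + 1) (.inl ⟨rfl, rfl⟩) (by simp)
    have hstep (i : Fin (k + 1)) (j j' : Fin 4) (hj : j' = j ∨ j' = j + 1) :
        f (i.succ, j') ≠ f (i.castSucc, j) :=
      (hf _ _ (.inr (.inl ⟨by simp, hj⟩)) (by simp [Fin.castSucc_lt_succ.ne])).symm
    refine ⟨hf (0, 0) (0, 2) (.inr (.inr (.inl ⟨rfl, rfl, rfl, rfl⟩))) (by simp), fun i => ?_,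
      hf (Fin.last _, 0) (Fin.last _, 2) (.inr (.inr (.inr ⟨rfl, rfl, rfl, rfl⟩))) (by simp)⟩
    exact ⟨hcycle _, hcycle _, fun j => ⟨hstep i j _ (.inl rfl), hstep i j _ (.inr rfl)⟩⟩
  · rintro ⟨hfirst, hchain, hlast⟩
    have hcycle : ∀ i, IsCycleColoring (Function.curry f i) :=
      Fin.lastCases (by simpa using (hchain (Fin.last k)).2.1) fun i => (hchain i).1
    rintro ⟨i, j⟩ ⟨i', j'⟩ h -
    dsimp only [qkRel] at h
    rcases h with ⟨rfl, rfl⟩ | ⟨hi, hj⟩ | ⟨hi, hi', rfl, rfl⟩ | ⟨hi, hi', rfl, rfl⟩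
    · exact hcycle i j
    · obtain ⟨m, rfl⟩ : ∃ m : Fin (k + 1), i = m.castSucc := ⟨⟨i, by omega⟩, rfl⟩
      obtain rfl : i' = m.succ := Fin.ext hi
      rcases hj with rfl | rfl
      exacts [((hchain m).2.2 _).1.symm, ((hchain m).2.2 _).2.symm]
    · obtain rfl : i = 0 := Fin.ext hi
      obtain rfl : i' = 0 := Fin.ext hi'
      exact hfirst
    · obtain rfl : i = Fin.last _ := Fin.ext hi
      obtain rfl : i' = Fin.last _ := Fin.ext hi'
      exact hlast

theorem card_properColorings_Qk (k : ℕ) :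
    Nat.card {f : Fin (k + 2) × Fin 4 → Fin 4 // IsProperColoring (Qk k) f} = 72 * 2 ^ k := by
  calc Nat.card {f : Fin (k + 2) × Fin 4 → Fin 4 // IsProperColoring (Qk k) f}
      = #{g : Fin (k + 2) → Fin 4 → Fin 4 |
          HasChord (g 0) ∧ IsRelChain LayerStep g ∧ HasChord (g (Fin.last (k + 1)))} := by
        rw [Nat.card_congr ((Equiv.curry _ _ _).subtypeEquiv (q := fun g =>
          HasChord (g 0) ∧ IsRelChain LayerStep g ∧ HasChord (g (Fin.last (k + 1))))
          isProperColoring_Qk_iff),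
          Nat.card_eq_fintype_card, Fintype.card_subtype]
    _ = ∑ t with HasChord t, 2 ^ k * diagWeight t := by
        rw [card_chains_eq_sum]
        exact sum_congr rfl fun t _ => card_chainsFrom_eq_pow_mul _ _ _ 2
          card_layerStep_hasChord sum_layerStep_diagWeight k t
    _ = 72 * 2 ^ k := by rw [← mul_sum, sum_hasChord_diagWeight, mul_comm]

/-- `Q_k` has exactly `3·2^k` coloring-partitions, equivalently exactly `72·2^k` proper
4-colorings. -/
theorem Qk_coloring_count (k : ℕ) :
    {P : Set (Set (Fin (k + 2) × Fin 4)) | IsColoringPartition (Qk k) P}.ncard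
        = 3 * 2 ^ k ∧
    Nat.card {f : Fin (k + 2) × Fin 4 → Fin 4 // IsProperColoring (Qk k) f}
        = 72 * 2 ^ k := by
  have hcard := card_properColorings_Qk k
  have htriangle := card_properColorings_eq_mul_ncard (Qk k) (u := (0, 0)) (v := (0, 1))
    (w := (0, 2)) (by simp [Qk, qkRel]) (by simp [Qk, qkRel]) (by simp [Qk, qkRel])
  exact ⟨by omega, hcard⟩
end

section
/- For every integer k ≥ 0, the number of coloring-partitions of Q_k that arise from proper 4-colorings assigning four pairwise distinct colors to the vertices a_0, b_0, c_0, d_0 (colorings of type I) is exactly 2^{k+1}. -/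
/-
A type I coloring, composed with a permutation of the colors, becomes the identity on level 0.
Each level of `Q_k` is a 4-cycle, and the connecting edges out of level `i` together with the
cycle at level `i + 1` force level `i + 1` to be level `i` rotated by one or two further
steps. So the normalised type I colorings are exactly `(i, j) ↦ j + t_i` with `t_0 = 0` and
`t_{i+1} - t_i ∈ {1, 2}` (the chords `a c` never clash since `0 ≠ 2` after any rotation), one
for each of the `2^(k+1)` step sequences. Distinct sequences give distinct partitions: the step
at level `i` is 2 exactly when `c_i` and `a_{i+1}` share a color.
-/

theorem IsProperColoring.comp_injective {V : Type*} {G : SimpleGraph V} {f : V → Fin 4}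
    (hf : IsProperColoring G f) {e : Fin 4 → Fin 4} (he : Function.Injective e) :
    IsProperColoring G (e ∘ f) :=
  fun _ _ huv heq => hf huv (he heq)

section colPart

variable {V : Type*}

theorem exists_mem_colPart_iff {f : V → Fin 4} {u v : V} :
    (∃ A ∈ colPart f, u ∈ A ∧ v ∈ A) ↔ f u = f v := by
  constructor
  · rintro ⟨A, ⟨-, c, rfl⟩, hu, hv⟩
    exact hu.trans hv.symm
  · intro h
    exact ⟨f ⁻¹' {f u}, ⟨⟨u, rfl⟩, f u, rfl⟩, rfl, h.symm⟩

theorem apply_eq_apply_iff_of_colPart_eq {f g : V → Fin 4} (h : colPart f = colPart g)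
    (u v : V) : f u = f v ↔ g u = g v := by
  rw [← exists_mem_colPart_iff, ← exists_mem_colPart_iff, h]

theorem colPart_comp_of_injective {e : Fin 4 → Fin 4} (he : Function.Injective e)
    (g : V → Fin 4) : colPart (e ∘ g) = colPart g := by
  ext A
  simp only [colPart, Set.mem_ofPred_eq, and_congr_right_iff]
  rintro ⟨x, hx⟩
  constructor
  · rintro ⟨c, rfl⟩
    refine ⟨g x, ?_⟩
    ext y
    simp only [Set.mem_preimage, Set.mem_singleton_iff, Function.comp_apply] at hx ⊢
    rw [← hx, he.eq_iff]
  · rintro ⟨c, rfl⟩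
    exact ⟨e c, by ext y; simp [he.eq_iff]⟩

end colPart

set_option maxRecDepth 10000 in
theorem Fin.eq_add_one_or_eq_add_two_of_forall_ne (u : Fin 4 → Fin 4)
    (h₀ : ∀ j, u j ≠ j) (h₁ : ∀ j, u (j + 1) ≠ j) (h₂ : ∀ j, u j ≠ u (j + 1)) :
    (∀ j, u j = j + 1) ∨ (∀ j, u j = j + 2) := by
  revert u
  decide

namespace Qk

variable {k : ℕ}

theorem adj_add_one (i : Fin (k + 2)) (j : Fin 4) : (Qk k).Adj (i, j) (i, j + 1) := by
  rw [Qk, SimpleGraph.fromRel_adj]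
  exact ⟨by simp, Or.inl (Or.inl ⟨rfl, rfl⟩)⟩

theorem adj_castSucc_succ (i : Fin (k + 1)) (j : Fin 4) :
    (Qk k).Adj (i.castSucc, j) (i.succ, j) := by
  rw [Qk, SimpleGraph.fromRel_adj]
  exact ⟨by simp [Fin.ext_iff], Or.inl (Or.inr (Or.inl ⟨by simp, Or.inl rfl⟩))⟩

theorem adj_castSucc_succ_add_one (i : Fin (k + 1)) (j : Fin 4) :
    (Qk k).Adj (i.castSucc, j) (i.succ, j + 1) := by
  rw [Qk, SimpleGraph.fromRel_adj]
  exact ⟨by simp [Fin.ext_iff], Or.inl (Or.inr (Or.inl ⟨by simp, Or.inr rfl⟩))⟩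

theorem exists_succ_eq_add_of_castSucc_eq_add {g : Fin (k + 2) × Fin 4 → Fin 4}
    (hg : IsProperColoring (Qk k) g) (i : Fin (k + 1)) {s : Fin 4}
    (hs : ∀ j, g (i.castSucc, j) = j + s) :
    ∃ d : Fin 4, (d = 1 ∨ d = 2) ∧ ∀ j, g (i.succ, j) = j + s + d := by
  obtain ⟨u, hg_eq⟩ : ∃ u : Fin 4 → Fin 4, ∀ j, g (i.succ, j) = u j + s :=
    ⟨fun j => g (i.succ, j) - s, fun j => (sub_add_cancel _ _).symm⟩
  have h₀ : ∀ j, u j ≠ j := fun j h =>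
    hg (adj_castSucc_succ i j) (by rw [hs, hg_eq, h])
  have h₁ : ∀ j, u (j + 1) ≠ j := fun j h =>
    hg (adj_castSucc_succ_add_one i j) (by rw [hs, hg_eq, h])
  have h₂ : ∀ j, u j ≠ u (j + 1) := fun j h =>
    hg (adj_add_one i.succ j) (by rw [hg_eq, hg_eq, h])
  rcases Fin.eq_add_one_or_eq_add_two_of_forall_ne u h₀ h₁ h₂ with hu' | hu'
  · exact ⟨1, .inl rfl, fun j => by rw [hg_eq, hu', add_right_comm]⟩
  · exact ⟨2, .inr rfl, fun j => by rw [hg_eq, hu', add_right_comm]⟩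

theorem isProperColoring_add_of_steps {t : Fin (k + 2) → Fin 4}
    (ht : ∀ i : Fin (k + 1), t i.succ = t i.castSucc + 1 ∨ t i.succ = t i.castSucc + 2) :
    IsProperColoring (Qk k) (fun v => v.2 + t v.1) := by
  have key : ∀ u v, qkRel k u v → u.2 + t u.1 ≠ v.2 + t v.1 := by
    rintro ⟨i, a⟩ ⟨i', b⟩ h
    simp only [qkRel] at h ⊢
    rcases h with ⟨rfl, rfl⟩ | ⟨hi, hb⟩ | ⟨hi, hi', rfl, rfl⟩ | ⟨hi, hi', rfl, rfl⟩
    · simp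
    · obtain ⟨m, rfl, rfl⟩ : ∃ m : Fin (k + 1), i = m.castSucc ∧ i' = m.succ :=
        ⟨⟨i, by omega⟩, rfl, Fin.ext (by simp [hi])⟩
      rcases ht m with h | h <;> rcases hb with rfl | rfl <;> rw [h] <;>
        simp only [ne_eq, Fin.ext_iff, Fin.val_add] <;> omega
    all_goals
      rw [show i' = i by omega]
      simp only [ne_eq, Fin.ext_iff, Fin.val_add]
      omega
  intro u v huv
  rw [Qk, SimpleGraph.fromRel_adj] at huv
  rcases huv.2 with h | h
  · exact key u v h
  · exact (key v u h).symm

def step (b : Bool) : Fin 4 := if b then 2 else 1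

def levelShift (ε : Fin (k + 1) → Bool) : Fin (k + 2) → Fin 4 :=
  Fin.partialSum fun i => step (ε i)

def shiftColoring (ε : Fin (k + 1) → Bool) (v : Fin (k + 2) × Fin 4) : Fin 4 :=
  v.2 + levelShift ε v.1

theorem levelShift_succ (ε : Fin (k + 1) → Bool) (i : Fin (k + 1)) :
    levelShift ε i.succ = levelShift ε i.castSucc + step (ε i) :=
  Fin.partialSum_succ _ i

theorem shiftColoring_zero (ε : Fin (k + 1) → Bool) (j : Fin 4) :
    shiftColoring ε (0, j) = j := by
  simp [shiftColoring, levelShift]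

theorem isProperColoring_shiftColoring (ε : Fin (k + 1) → Bool) :
    IsProperColoring (Qk k) (shiftColoring ε) :=
  isProperColoring_add_of_steps fun i => by
    rw [levelShift_succ]
    cases ε i
    · exact .inl rfl
    · exact .inr rfl

theorem shiftColoring_succ_zero_eq_castSucc_two_iff (ε : Fin (k + 1) → Bool) (i : Fin (k + 1)) :
    shiftColoring ε (i.succ, 0) = shiftColoring ε (i.castSucc, 2) ↔ ε i = true := by
  simp only [shiftColoring, levelShift_succ]
  generalize levelShift ε i.castSucc = x
  cases ε i <;> revert x <;> decide

theorem injective_colPart_shiftColoring :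
    Function.Injective fun ε : Fin (k + 1) → Bool => colPart (shiftColoring ε) := by
  intro ε ε' h
  funext i
  rw [Bool.eq_iff_iff, ← shiftColoring_succ_zero_eq_castSucc_two_iff,
    ← shiftColoring_succ_zero_eq_castSucc_two_iff]
  exact apply_eq_apply_iff_of_colPart_eq h _ _

theorem exists_eq_shiftColoring {g : Fin (k + 2) × Fin 4 → Fin 4}
    (hg : IsProperColoring (Qk k) g) (h0 : ∀ j, g (0, j) = j) :
    ∃ ε, g = shiftColoring ε := by
  set ε : Fin (k + 1) → Bool := fun i => decide (g (i.succ, 0) - g (i.castSucc, 0) = 2) with hε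
  have hlevel : ∀ i j, g (i, j) = j + levelShift ε i := by
    intro i
    induction i using Fin.induction with
    | zero => simpa [levelShift] using h0
    | succ i ih =>
      obtain ⟨d, hd, hsucc⟩ := exists_succ_eq_add_of_castSucc_eq_add hg i ih
      have hdiff : g (i.succ, 0) - g (i.castSucc, 0) = d := by
        rw [hsucc, ih, zero_add, add_sub_cancel_left]
      have hstep : step (ε i) = d := by
        rcases hd with rfl | rfl <;> simp [hε, hdiff, step]
      intro j
      rw [hsucc, levelShift_succ, hstep, add_assoc]
  exact ⟨ε, funext fun v => hlevel v.1 v.2⟩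

theorem exists_colPart_eq_colPart_shiftColoring {f : Fin (k + 2) × Fin 4 → Fin 4}
    (hf : IsProperColoring (Qk k) f) (hinj : Function.Injective fun j => f (0, j)) :
    ∃ ε, colPart f = colPart (shiftColoring ε) := by
  let e := Equiv.ofBijective _ (Finite.injective_iff_bijective.mp hinj)
  obtain ⟨ε, hε⟩ := exists_eq_shiftColoring (hf.comp_injective e.symm.injective)
    fun j => e.symm_apply_apply j
  refine ⟨ε, ?_⟩
  rw [← hε, colPart_comp_of_injective e.symm.injective]

end Qk

/-- The number of coloring-partitions of `Q_k` arising from proper 4-colorings that use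
four pairwise distinct colors on `a_0, b_0, c_0, d_0` (type I colorings) is `2^(k+1)`. -/
theorem Qk_typeI_partition_count (k : ℕ) :
    {P : Set (Set (Fin (k + 2) × Fin 4)) | ∃ f, IsProperColoring (Qk k) f ∧
      Function.Injective (fun j : Fin 4 => f ((0 : Fin (k + 2)), j)) ∧
      P = colPart f}.ncard = 2 ^ (k + 1) := by
  calc _ = (Set.range fun ε : Fin (k + 1) → Bool => colPart (Qk.shiftColoring ε)).ncard := by
        congr 1
        ext P
        constructor
        · rintro ⟨f, hf, hinj, rfl⟩
          obtain ⟨ε, hε⟩ := Qk.exists_colPart_eq_colPart_shiftColoring hf hinj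
          exact ⟨ε, hε.symm⟩
        · rintro ⟨ε, rfl⟩
          refine ⟨_, Qk.isProperColoring_shiftColoring ε, fun a b hab => ?_, rfl⟩
          simpa only [Qk.shiftColoring_zero] using hab
    _ = Nat.card (Fin (k + 1) → Bool) :=
        Set.ncard_range_of_injective Qk.injective_colPart_shiftColoring
    _ = 2 ^ (k + 1) := by simp
end

section
/- For every integer k ≥ 0, the number of coloring-partitions of Q_k that arise from proper 4-colorings f with f(b_0) = f(d_0) (colorings of type II) is exactly 2^k. -/
/-! Auxiliary machinery for counting type II colorings of Q_k. -/

def w4 (x y z : Fin 4) : Fin 4 := 2 - x - y - z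

def stepC (τ b : Bool) (g : Fin 4 → Fin 4) : Fin 4 → Fin 4 :=
  if τ then
    (if b then ![g 1, w4 (g 0) (g 1) (g 3), g 3, w4 (g 0) (g 1) (g 3)]
     else ![w4 (g 0) (g 1) (g 3), g 3, w4 (g 0) (g 1) (g 3), g 1])
  else
    (if b then ![w4 (g 0) (g 1) (g 2), g 2, w4 (g 0) (g 1) (g 2), g 0]
     else ![g 2, w4 (g 0) (g 1) (g 2), g 0, w4 (g 0) (g 1) (g 2)])

def ValidC (τ : Bool) (g : Fin 4 → Fin 4) : Prop :=
  if τ then g 0 = g 2 ∧ g 0 ≠ g 1 ∧ g 0 ≠ g 3 ∧ g 1 ≠ g 3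
  else g 1 = g 3 ∧ g 0 ≠ g 1 ∧ g 0 ≠ g 2 ∧ g 1 ≠ g 2

instance (τ : Bool) (g : Fin 4 → Fin 4) : Decidable (ValidC τ g) := by
  unfold ValidC; exact inferInstance

def patC (τ : Bool) (x y z : Fin 4) : Fin 4 → Fin 4 :=
  if τ then ![x, y, x, z] else ![x, y, z, y]

set_option maxRecDepth 10000 in
lemma step_good : ∀ (τ b : Bool) (g0 g1 g2 g3 : Fin 4), ValidC τ ![g0,g1,g2,g3] →
    (ValidC (xor τ b) (stepC τ b ![g0,g1,g2,g3]) ∧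
     ∀ j : Fin 4, stepC τ b ![g0,g1,g2,g3] j ≠ ![g0,g1,g2,g3] j ∧
       stepC τ b ![g0,g1,g2,g3] (j+1) ≠ ![g0,g1,g2,g3] j) := by decide

lemma fin4_eta (g : Fin 4 → Fin 4) : ![g 0, g 1, g 2, g 3] = g := by
  funext j; fin_cases j <;> rfl

lemma step_good' (τ b : Bool) (g : Fin 4 → Fin 4) (hg : ValidC τ g) :
    ValidC (xor τ b) (stepC τ b g) ∧
      ∀ j : Fin 4, stepC τ b g j ≠ g j ∧ stepC τ b g (j+1) ≠ g j := by
  have := step_good τ b (g 0) (g 1) (g 2) (g 3)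
  rw [fin4_eta g] at this
  exact this hg

set_option maxRecDepth 100000 in
set_option maxHeartbeats 4000000 in
set_option synthInstance.maxHeartbeats 2000000 in
set_option synthInstance.maxSize 2000 in
lemma step_unique : ∀ (τ : Bool) (x y z h0 h1 h2 h3 : Fin 4),
    x ≠ y → x ≠ z → y ≠ z →
    h0 ≠ h1 → h1 ≠ h2 → h2 ≠ h3 → h3 ≠ h0 →
    h0 ≠ patC τ x y z 0 → h0 ≠ patC τ x y z 3 → h1 ≠ patC τ x y z 1 →
    h1 ≠ patC τ x y z 0 → h2 ≠ patC τ x y z 2 → h2 ≠ patC τ x y z 1 →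
    h3 ≠ patC τ x y z 3 → h3 ≠ patC τ x y z 2 →
    ∃ b : Bool, h0 = stepC τ b (patC τ x y z) 0 ∧ h1 = stepC τ b (patC τ x y z) 1 ∧
      h2 = stepC τ b (patC τ x y z) 2 ∧ h3 = stepC τ b (patC τ x y z) 3 := by decide

lemma pat_of_valid (τ : Bool) (g : Fin 4 → Fin 4) (hg : ValidC τ g) :
    g = patC τ (g 0) (g 1) (if τ then g 3 else g 2) := by
  cases τ with
  | false =>
    simp [ValidC] at hg
    funext j; fin_cases j <;> simp [patC]
    exact hg.1.symm
  | true =>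
    simp [ValidC] at hg
    funext j; fin_cases j <;> simp [patC]
    exact hg.1.symm

lemma valid_distinct (τ : Bool) (g : Fin 4 → Fin 4) (hg : ValidC τ g) :
    g 0 ≠ g 1 ∧ g 0 ≠ (if τ then g 3 else g 2) ∧ g 1 ≠ (if τ then g 3 else g 2) := by
  cases τ <;> simp [ValidC] at hg <;> simp <;> tauto

lemma step_unique' (τ : Bool) (g h : Fin 4 → Fin 4) (hg : ValidC τ g)
    (hh0 : h 0 ≠ h 1) (hh1 : h 1 ≠ h 2) (hh2 : h 2 ≠ h 3) (hh3 : h 3 ≠ h 0)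
    (hc : ∀ j : Fin 4, h j ≠ g j ∧ h (j+1) ≠ g j) :
    ∃ b : Bool, ∀ j : Fin 4, h j = stepC τ b g j := by
  obtain ⟨d0, d1, d2⟩ := valid_distinct τ g hg
  have hpat := pat_of_valid τ g hg
  obtain ⟨b, e0, e1, e2, e3⟩ := step_unique τ (g 0) (g 1) (if τ then g 3 else g 2)
    (h 0) (h 1) (h 2) (h 3) d0 d1 d2 hh0 hh1 hh2 hh3
    (by rw [← hpat]; exact (hc 0).1) (by rw [← hpat]; exact (hc 3).2)
    (by rw [← hpat]; exact (hc 1).1) (by rw [← hpat]; exact (hc 0).2)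
    (by rw [← hpat]; exact (hc 2).1) (by rw [← hpat]; exact (hc 1).2)
    (by rw [← hpat]; exact (hc 3).1) (by rw [← hpat]; exact (hc 2).2)
  rw [← hpat] at e0 e1 e2 e3
  exact ⟨b, fun j => by fin_cases j <;> assumption⟩

lemma valid_cycle (τ : Bool) (g : Fin 4 → Fin 4) (hg : ValidC τ g) :
    ∀ j : Fin 4, g j ≠ g (j + 1) := by
  have : ∀ (τ : Bool) (g0 g1 g2 g3 : Fin 4), ValidC τ ![g0,g1,g2,g3] →
      ∀ j : Fin 4, ![g0,g1,g2,g3] j ≠ ![g0,g1,g2,g3] (j+1) := by decide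
  have h := this τ (g 0) (g 1) (g 2) (g 3)
  rw [fin4_eta g] at h
  exact h hg

lemma valid_bd_iff (τ : Bool) (g : Fin 4 → Fin 4) (hg : ValidC τ g) :
    (g 1 = g 3) ↔ τ = false := by
  cases τ <;> simp [ValidC] at hg <;> simp [hg.1, hg.2.2.2]

lemma valid_ac (g : Fin 4 → Fin 4) (hg : ValidC false g) : g 0 ≠ g 2 := by
  simp [ValidC] at hg; exact hg.2.2.1

/-- parity of flips before level `i` -/
def tauC (s : ℕ → Bool) : ℕ → Bool
  | 0 => false
  | i+1 => xor (tauC s i) (s i)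

/-- the canonical level colorings -/
def levC (s : ℕ → Bool) : ℕ → (Fin 4 → Fin 4)
  | 0 => ![0,1,2,1]
  | i+1 => stepC (tauC s i) (s i) (levC s i)

lemma tauC_congr {s s' : ℕ → Bool} : ∀ {i : ℕ}, (∀ j < i, s j = s' j) →
    tauC s i = tauC s' i
  | 0, _ => rfl
  | i+1, h => by
    simp only [tauC, tauC_congr (fun j hj => h j (Nat.lt_succ_of_lt hj)),
      h i (Nat.lt_succ_self i)]

lemma levC_congr {s s' : ℕ → Bool} : ∀ {i : ℕ}, (∀ j < i, s j = s' j) →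
    levC s i = levC s' i
  | 0, _ => rfl
  | i+1, h => by
    simp only [levC, levC_congr (fun j hj => h j (Nat.lt_succ_of_lt hj)),
      tauC_congr (fun j hj => h j (Nat.lt_succ_of_lt hj)), h i (Nat.lt_succ_self i)]

lemma levC_valid (s : ℕ → Bool) : ∀ i : ℕ, ValidC (tauC s i) (levC s i) := by
  intro i
  induction i with
  | zero => show ValidC false ![0,1,2,1]; decide
  | succ i ih => exact (step_good' _ (s i) _ ih).1

def baseS (k : ℕ) (t : Fin k → Bool) : ℕ → Bool :=
  fun j => if h : j < k then t ⟨j, h⟩ else false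

def sOf (k : ℕ) (t : Fin k → Bool) : ℕ → Bool :=
  fun j => if j < k then baseS k t j else tauC (baseS k t) k

/-- the canonical type II coloring attached to `t` -/
def Fc (k : ℕ) (t : Fin k → Bool) (u : Fin (k+2) × Fin 4) : Fin 4 :=
  levC (sOf k t) u.1 u.2

lemma sOf_eq_base (k : ℕ) (t : Fin k → Bool) {j : ℕ} (h : j < k) :
    sOf k t j = baseS k t j := if_pos h

lemma tau_sOf (k : ℕ) (t : Fin k → Bool) {i : ℕ} (h : i ≤ k) :
    tauC (sOf k t) i = tauC (baseS k t) i :=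
  tauC_congr (fun j hj => sOf_eq_base k t (lt_of_lt_of_le hj h))

lemma sOf_k (k : ℕ) (t : Fin k → Bool) : sOf k t k = tauC (sOf k t) k := by
  rw [tau_sOf k t le_rfl]; simp [sOf]

lemma tau_top (k : ℕ) (t : Fin k → Bool) : tauC (sOf k t) (k+1) = false := by
  simp only [tauC, sOf_k k t, Bool.xor_self]

/-! kernel lemmas for colPart -/

lemma colPart_subset {V : Type*} {f g : V → Fin 4}
    (h : ∀ u v, f u = f v ↔ g u = g v) : colPart f ⊆ colPart g := by
  rintro A ⟨⟨u, hu⟩, c, rfl⟩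
  have hu' : f u = c := hu
  refine ⟨⟨u, hu⟩, g u, ?_⟩
  ext v
  simp only [Set.mem_preimage, Set.mem_singleton_iff]
  rw [← hu']
  exact ⟨fun hv => (h v u).1 hv, fun hv => (h v u).2 hv⟩

lemma colPart_eq_of_ker {V : Type*} {f g : V → Fin 4}
    (h : ∀ u v, f u = f v ↔ g u = g v) : colPart f = colPart g :=
  le_antisymm (colPart_subset h) (colPart_subset (fun u v => (h u v).symm))

lemma ker_of_colPart_eq {V : Type*} {f g : V → Fin 4}
    (h : colPart f = colPart g) (u v : V) (hf : f u = f v) : g u = g v := by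
  have hm : f ⁻¹' {f u} ∈ colPart f := ⟨⟨u, rfl⟩, f u, rfl⟩
  rw [h] at hm
  obtain ⟨-, c, hc⟩ := hm
  have h1 : g u = c := by
    have : u ∈ f ⁻¹' {f u} := rfl
    rw [hc] at this; exact this
  have h2 : g v = c := by
    have : v ∈ f ⁻¹' {f u} := by simp [Set.mem_preimage, hf]
    rw [hc] at this; exact this
  rw [h1, h2]

/-! adjacency helpers for Qk -/

lemma qk_adj {k : ℕ} {u v : Fin (k+2) × Fin 4} (hne : u ≠ v) (h : qkRel k u v) :
    (Qk k).Adj u v := by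
  rw [Qk, SimpleGraph.fromRel_adj]
  exact ⟨hne, Or.inl h⟩

lemma fin4_ne_succ : ∀ j : Fin 4, j ≠ j + 1 := by decide

lemma prop_cycle {k : ℕ} {f : Fin (k+2) × Fin 4 → Fin 4}
    (hf : IsProperColoring (Qk k) f) (i : Fin (k+2)) (j : Fin 4) :
    f (i, j) ≠ f (i, j + 1) := by
  refine hf (qk_adj ?_ ?_)
  · exact fun h => fin4_ne_succ j (congrArg Prod.snd h)
  · exact Or.inl ⟨rfl, rfl⟩

lemma prop_cross {k : ℕ} {f : Fin (k+2) × Fin 4 → Fin 4}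
    (hf : IsProperColoring (Qk k) f) {i i' : Fin (k+2)} (hii : (i' : ℕ) = (i : ℕ) + 1)
    (j j' : Fin 4) (hj : j' = j ∨ j' = j + 1) :
    f (i', j') ≠ f (i, j) := by
  refine (hf (qk_adj ?_ ?_)).symm
  · simp only [ne_eq, Prod.mk.injEq, not_and]
    intro h; exfalso; rw [h] at hii; omega
  · exact Or.inr (Or.inl ⟨hii, hj⟩)

lemma prop_chord0 {k : ℕ} {f : Fin (k+2) × Fin 4 → Fin 4}
    (hf : IsProperColoring (Qk k) f) :
    f ((0 : Fin (k+2)), (0 : Fin 4)) ≠ f ((0 : Fin (k+2)), (2 : Fin 4)) := by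
  refine hf (qk_adj ?_ ?_)
  · simp [Prod.ext_iff]
  · refine Or.inr (Or.inr (Or.inl ⟨?_, ?_, rfl, rfl⟩)) <;> simp
lemma prop_chordTop {k : ℕ} {f : Fin (k+2) × Fin 4 → Fin 4}
    (hf : IsProperColoring (Qk k) f) {i : Fin (k+2)} (hi : (i : ℕ) = k + 1) :
    f (i, (0 : Fin 4)) ≠ f (i, (2 : Fin 4)) := by
  refine hf (qk_adj ?_ ?_)
  · intro h
    have := congrArg Prod.snd h
    simp at this
  · exact Or.inr (Or.inr (Or.inr ⟨hi, hi, rfl, rfl⟩))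

lemma Fc_proper (k : ℕ) (t : Fin k → Bool) : IsProperColoring (Qk k) (Fc k t) := by
  have aux : ∀ u v, qkRel k u v → Fc k t u ≠ Fc k t v := by
    rintro ⟨i, j⟩ ⟨i', j'⟩ (⟨h1, h2⟩ | ⟨h1, h2⟩ | ⟨h1, h2, h3, h4⟩ | ⟨h1, h2, h3, h4⟩)
    · simp only at h1 h2
      subst h1; subst h2
      exact valid_cycle _ _ (levC_valid (sOf k t) _) _
    · simp only at h1 h2
      show levC (sOf k t) (i : ℕ) j ≠ levC (sOf k t) (i' : ℕ) j'
      rw [h1]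
      have hs := (step_good' (tauC (sOf k t) (i:ℕ)) (sOf k t (i:ℕ)) _
        (levC_valid (sOf k t) (i:ℕ))).2
      rcases h2 with rfl | rfl
      · exact fun he => (hs _).1 he.symm
      · exact fun he => (hs _).2 he.symm
    · simp only at h1 h2 h3 h4
      show levC (sOf k t) (i : ℕ) j ≠ levC (sOf k t) (i' : ℕ) j'
      rw [h1, h2, h3, h4]
      exact fun hh => (by decide : (0 : Fin 4) ≠ 2) hh
    · simp only at h1 h2 h3 h4
      show levC (sOf k t) (i : ℕ) j ≠ levC (sOf k t) (i' : ℕ) j'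
      rw [h1, h2, h3, h4]
      have hv := levC_valid (sOf k t) (k+1)
      rw [tau_top k t] at hv
      exact valid_ac _ hv
  intro u v hadj
  rw [Qk, SimpleGraph.fromRel_adj] at hadj
  rcases hadj.2 with h | h
  · exact aux u v h
  · exact (aux v u h).symm

lemma Fc_start (k : ℕ) (t : Fin k → Bool) :
    Fc k t ((0 : Fin (k + 2)), (1 : Fin 4)) = Fc k t ((0 : Fin (k + 2)), (3 : Fin 4)) := rfl

lemma tau_detect (k : ℕ) (t : Fin k → Bool) (i : Fin (k+2)) :
    (Fc k t (i, 1) = Fc k t (i, 3)) ↔ tauC (sOf k t) (i : ℕ) = false :=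
  valid_bd_iff _ _ (levC_valid _ _)

lemma Fc_injective (k : ℕ) :
    Function.Injective (fun t : Fin k → Bool => colPart (Fc k t)) := by
  intro t t' h
  simp only at h
  funext i
  have hk : ∀ m : ℕ, m ≤ k + 1 → tauC (sOf k t) m = tauC (sOf k t') m := by
    intro m hm
    have hm2 : m < k + 2 := by omega
    have h13 : Fc k t (⟨m, hm2⟩, 1) = Fc k t (⟨m, hm2⟩, 3) ↔
        Fc k t' (⟨m, hm2⟩, 1) = Fc k t' (⟨m, hm2⟩, 3) :=
      ⟨ker_of_colPart_eq h _ _, ker_of_colPart_eq h.symm _ _⟩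
    rw [tau_detect k t ⟨m, hm2⟩, tau_detect k t' ⟨m, hm2⟩] at h13
    cases e1 : tauC (sOf k t) m <;> cases e2 : tauC (sOf k t') m <;>
      simp [e1, e2] at h13 ⊢
  have hi : (i : ℕ) < k := i.2
  have e1 := hk i (by omega)
  have e2 := hk ((i : ℕ) + 1) (by omega)
  rw [tauC, tauC, e1] at e2
  have hb : sOf k t (i : ℕ) = sOf k t' (i : ℕ) := by
    cases tauC (sOf k t') (i : ℕ) <;> cases ht : sOf k t (i : ℕ) <;>
      cases ht' : sOf k t' (i : ℕ) <;> simp_all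
  rw [sOf_eq_base k t hi, sOf_eq_base k t' hi] at hb
  simpa [baseS, hi] using hb

lemma sigma_inj : ∀ x y z : Fin 4, x ≠ y → x ≠ z → y ≠ z →
    ∀ a b : Fin 4, ![x, y, z, w4 x y z] a = ![x, y, z, w4 x y z] b → a = b := by decide

lemma Fc_surj (k : ℕ) (f : Fin (k+2) × Fin 4 → Fin 4) (hf : IsProperColoring (Qk k) f)
    (hbd : f ((0 : Fin (k+2)), (1 : Fin 4)) = f ((0 : Fin (k+2)), (3 : Fin 4))) :
    ∃ t : Fin k → Bool, colPart f = colPart (Fc k t) := by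
  classical
  set g0 : Fin 4 → Fin 4 := fun j => f ((0 : Fin (k+2)), j) with hg0def
  have d01 : g0 0 ≠ g0 1 := prop_cycle hf 0 0
  have d02 : g0 0 ≠ g0 2 := prop_chord0 hf
  have d12 : g0 1 ≠ g0 2 := prop_cycle hf 0 1
  set σ : Fin 4 → Fin 4 := ![g0 0, g0 1, g0 2, w4 (g0 0) (g0 1) (g0 2)] with hσdef
  have hinj : Function.Injective σ := fun a b => sigma_inj _ _ _ d01 d02 d12 a b
  have hbij : Function.Bijective σ := Finite.injective_iff_bijective.mp hinj
  set e : Fin 4 ≃ Fin 4 := Equiv.ofBijective σ hbij with hedef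
  set f' : Fin (k+2) × Fin 4 → Fin 4 := fun u => e.symm (f u) with hf'def
  have hf' : IsProperColoring (Qk k) f' :=
    fun u v hadj he => hf hadj (e.symm.injective he)
  have heapp : ∀ j, e j = σ j := fun j => rfl
  have f'0 : ∀ j : Fin 4, f' ((0 : Fin (k+2)), j) = ![0, 1, 2, 1] j := by
    intro j
    rw [hf'def]
    simp only [Equiv.symm_apply_eq]
    fin_cases j
    · exact (heapp 0).symm
    · exact (heapp 1).symm
    · exact (heapp 2).symm
    · rw [heapp]; exact hbd.symm
  have key : ∀ n : ℕ, n ≤ k + 1 → ∃ s : ℕ → Bool,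
      ∀ i : Fin (k+2), (i : ℕ) ≤ n → ∀ j : Fin 4, f' (i, j) = levC s (i : ℕ) j := by
    intro n
    induction n with
    | zero =>
      intro _
      refine ⟨fun _ => false, fun i hi j => ?_⟩
      have : i = 0 := Fin.ext (by simpa using hi)
      subst this
      exact f'0 j
    | succ n ih =>
      intro hn
      obtain ⟨s, hs⟩ := ih (by omega)
      have hn2 : n + 1 < k + 2 := by omega
      have hn1 : n < k + 2 := by omega
      have hgl : ∀ j, f' (⟨n, hn1⟩, j) = levC s n j := fun j => hs ⟨n, hn1⟩ le_rfl j
      have hcross : ∀ j : Fin 4, f' (⟨n+1, hn2⟩, j) ≠ levC s n j ∧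
          f' (⟨n+1, hn2⟩, j+1) ≠ levC s n j := by
        intro j
        constructor
        · rw [← hgl j]; exact prop_cross hf' rfl j j (Or.inl rfl)
        · rw [← hgl j]; exact prop_cross hf' rfl j (j+1) (Or.inr rfl)
      obtain ⟨b, hb⟩ := step_unique' (tauC s n) (levC s n) (fun j => f' (⟨n+1, hn2⟩, j))
        (levC_valid s n)
        (prop_cycle hf' ⟨n+1, hn2⟩ 0) (prop_cycle hf' ⟨n+1, hn2⟩ 1)
        (prop_cycle hf' ⟨n+1, hn2⟩ 2) (prop_cycle hf' ⟨n+1, hn2⟩ 3)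
        hcross
      refine ⟨Function.update s n b, fun i hi j => ?_⟩
      have hcong : ∀ m : ℕ, m ≤ n → levC (Function.update s n b) m = levC s m :=
        fun m hm => levC_congr (fun j' hj' => Function.update_of_ne (by omega) _ _)
      rcases Nat.lt_succ_iff_lt_or_eq.mp (Nat.lt_succ_of_le hi) with h | h
      · rw [hcong _ (Nat.lt_succ_iff.mp h)]
        exact hs i (Nat.lt_succ_iff.mp h) j
      · have hieq : i = ⟨n+1, hn2⟩ := Fin.ext h
        subst hieq
        show f' (⟨n+1, hn2⟩, j) = levC (Function.update s n b) (n+1) j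
        have : levC (Function.update s n b) (n+1) =
            stepC (tauC (Function.update s n b) n) (Function.update s n b n)
              (levC (Function.update s n b) n) := rfl
        rw [this, hcong n le_rfl, Function.update_self,
          tauC_congr (fun j' hj' => Function.update_of_ne (by omega) _ _)]
        exact hb j
  obtain ⟨s, hs⟩ := key (k+1) le_rfl
  have htop : tauC s (k+1) = false := by
    by_contra hcon
    rw [Bool.not_eq_false] at hcon
    have hv := levC_valid s (k+1)
    rw [hcon] at hv
    simp [ValidC] at hv
    have hkk : ((⟨k+1, by omega⟩ : Fin (k+2)) : ℕ) = k + 1 := rfl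
    have hTop : f' (⟨k+1, by omega⟩, (0 : Fin 4)) ≠ f' (⟨k+1, by omega⟩, (2 : Fin 4)) :=
      prop_chordTop hf' hkk
    rw [hs ⟨k+1, by omega⟩ (by simp) 0, hs ⟨k+1, by omega⟩ (by simp) 2] at hTop
    exact hTop hv.1
  have hsk : s k = tauC s k := by
    have : xor (tauC s k) (s k) = false := htop
    cases hx : tauC s k <;> cases hy : s k <;> simp_all
  refine ⟨fun i => s i, ?_⟩
  have hagree : ∀ m : ℕ, m ≤ k → sOf k (fun i : Fin k => s i) m = s m := by
    intro m hm
    rcases lt_or_eq_of_le hm with hlt | heq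
    · rw [sOf_eq_base k _ hlt]
      simp [baseS, hlt]
    · rw [heq, sOf_k, tau_sOf k _ le_rfl,
        show tauC (baseS k (fun i : Fin k => s i)) k = tauC s k from
          tauC_congr (fun j hj => by simp [baseS, hj])]
      exact hsk.symm
  have hFc : ∀ u, f' u = Fc k (fun i : Fin k => s i) u := by
    rintro ⟨i, j⟩
    rw [hs i (by omega) j, Fc]
    have : levC (sOf k (fun i : Fin k => s i)) (i : ℕ) = levC s (i : ℕ) :=
      levC_congr (fun m hm => hagree m (by omega))
    rw [this]
  have h1 : colPart f = colPart f' :=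
    colPart_eq_of_ker (fun u v => ⟨fun h => congrArg e.symm h, fun h => e.symm.injective h⟩)
  rw [h1, funext hFc]

/-- The number of coloring-partitions of `Q_k` arising from proper 4-colorings `f` with
`f(b_0) = f(d_0)` (type II colorings) is `2^k`. -/
theorem Qk_typeII_partition_count (k : ℕ) :
    {P : Set (Set (Fin (k + 2) × Fin 4)) | ∃ f, IsProperColoring (Qk k) f ∧
      f ((0 : Fin (k + 2)), (1 : Fin 4)) = f ((0 : Fin (k + 2)), (3 : Fin 4)) ∧
      P = colPart f}.ncard = 2 ^ k := by
  have hset : {P : Set (Set (Fin (k + 2) × Fin 4)) | ∃ f, IsProperColoring (Qk k) f ∧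
      f ((0 : Fin (k + 2)), (1 : Fin 4)) = f ((0 : Fin (k + 2)), (3 : Fin 4)) ∧
      P = colPart f} = Set.range (fun t : Fin k → Bool => colPart (Fc k t)) := by
    ext P
    constructor
    · rintro ⟨f, hf, hbd, rfl⟩
      obtain ⟨t, ht⟩ := Fc_surj k f hf hbd
      exact ⟨t, ht.symm⟩
    · rintro ⟨t, rfl⟩
      exact ⟨Fc k t, Fc_proper k t, Fc_start k t, rfl⟩
  rw [hset, ← Set.image_univ, Set.ncard_image_of_injective _ (Fc_injective k),
    Set.ncard_univ, Nat.card_eq_fintype_card]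
  simp
end

section
/- Let k ≥ 0 and let f and g be proper 4-colorings of Q_k, each assigning four pairwise distinct colors to a_0, b_0, c_0, d_0 (type I). If some nonempty color class of f equals some nonempty color class of g, then f and g induce the same coloring-partition of V(Q_k). -/
section Aux

set_option maxRecDepth 100000 in
lemma fin4_e (e : Fin 4 → Fin 4) (h1 : ∀ j, e j ≠ e (j + 1)) (h2 : ∀ j, e j ≠ j)
    (h3 : ∀ j, e (j + 1) ≠ j) :
    (∀ j, e j = j + 1) ∨ (∀ j, e j = j + 2) := by
  revert h1 h2 h3; revert e; decide

lemma fin4_step (c d : Fin 4 → Fin 4) (hc : Function.Injective c)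
    (h1 : ∀ j, d j ≠ d (j + 1)) (h2 : ∀ j, d j ≠ c j) (h3 : ∀ j, d (j + 1) ≠ c j) :
    (∀ j, d j = c (j + 1)) ∨ (∀ j, d j = c (j + 2)) := by
  have hb : Function.Bijective c := Finite.injective_iff_bijective.mp hc
  let π : Fin 4 ≃ Fin 4 := Equiv.ofBijective c hb
  have hd : ∀ j, d j = c (π.symm (d j)) := fun j => (π.apply_symm_apply (d j)).symm
  have := fin4_e (fun j => π.symm (d j))
    (fun j h => h1 j (by rw [hd j, hd (j+1)]; exact congrArg c h))
    (fun j h => h2 j (by rw [hd j]; exact congrArg c h))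
    (fun j h => h3 j (by rw [hd (j+1)]; exact congrArg c h))
  rcases this with h | h
  · exact Or.inl fun j => by rw [hd j]; exact congrArg c (h j)
  · exact Or.inr fun j => by rw [hd j]; exact congrArg c (h j)

lemma fin4_add_zero : ∀ j : Fin 4, j + 0 = j := by decide
lemma fin4_assoc1 : ∀ j t : Fin 4, j + 1 + t = j + (t + 1) := by decide
lemma fin4_assoc2 : ∀ j t : Fin 4, j + 2 + t = j + (t + 2) := by decide
lemma fin4_add_right_inj : ∀ t a b : Fin 4, a + t = b + t → a = b := by decide
lemma fin4_sub_add : ∀ a b : Fin 4, a - b + b = a := by decide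
lemma fin4_solve : ∀ a b x y : Fin 4, (a - x) + y = b → y = (b - a) + x := by decide
lemma fin4_cancel : ∀ x y d u : Fin 4, (x + (d + y) = d + u) ↔ x + y = u := by decide
lemma fin4_add_sub : ∀ d u : Fin 4, d + (u - d) = u := by decide

lemma colPart_subset_s12 {V : Type*} (f g : V → Fin 4) (F G : Fin 4 → Fin 4)
    (hFs : Function.Surjective F)
    (H : ∀ u, ∃ u', f ⁻¹' {F u} = g ⁻¹' {G u'}) :
    colPart f ⊆ colPart g := by
  rintro A ⟨hA, c, rfl⟩
  obtain ⟨u, rfl⟩ := hFs c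
  obtain ⟨u', h⟩ := H u
  exact ⟨hA, G u', h⟩

lemma qk_adj_layer (k : ℕ) (i : Fin (k + 2)) (j : Fin 4) : (Qk k).Adj (i, j) (i, j + 1) := by
  rw [Qk, SimpleGraph.fromRel_adj]
  refine ⟨fun h => fin4_ne_succ j (congrArg Prod.snd h), Or.inl (Or.inl ⟨rfl, rfl⟩)⟩

lemma qk_adj_next (k : ℕ) (i i' : Fin (k + 2)) (h : (i' : ℕ) = (i : ℕ) + 1) (j j' : Fin 4)
    (hj : j' = j ∨ j' = j + 1) : (Qk k).Adj (i, j) (i', j') := by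
  rw [Qk, SimpleGraph.fromRel_adj]
  refine ⟨fun he => ?_, Or.inl (Or.inr (Or.inl ⟨h, hj⟩))⟩
  have : (i : ℕ) = (i' : ℕ) := congrArg (fun p => ((Prod.fst p : Fin (k+2)) : ℕ)) he
  omega

lemma qk_layers (k : ℕ) (f : Fin (k + 2) × Fin 4 → Fin 4)
    (hf : IsProperColoring (Qk k) f)
    (hfI : Function.Injective (fun j : Fin 4 => f ((0 : Fin (k + 2)), j))) :
    ∀ i : Fin (k + 2), ∃ t : Fin 4, ∀ j, f (i, j) = f ((0 : Fin (k + 2)), j + t) := by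
  have key : ∀ n : ℕ, ∀ h : n < k + 2, ∃ t : Fin 4,
      ∀ j, f (⟨n, h⟩, j) = f ((0 : Fin (k + 2)), j + t) := by
    intro n
    induction n with
    | zero =>
      intro h
      refine ⟨0, fun j => ?_⟩
      have h0 : (⟨0, h⟩ : Fin (k + 2)) = 0 := by ext; simp
      rw [h0, fin4_add_zero]
    | succ n ih =>
      intro h
      have hn : n < k + 2 := by omega
      obtain ⟨t, ht⟩ := ih hn
      set c : Fin 4 → Fin 4 := fun j => f (⟨n, hn⟩, j) with hc_def
      set d : Fin 4 → Fin 4 := fun j => f (⟨n + 1, h⟩, j) with hd_def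
      have hstep : (⟨n + 1, h⟩ : Fin (k + 2)).val = (⟨n, hn⟩ : Fin (k + 2)).val + 1 := rfl
      have hc : Function.Injective c := by
        intro a b hab
        simp only [hc_def, ht] at hab
        exact fin4_add_right_inj t a b (hfI hab)
      have h1 : ∀ j, d j ≠ d (j + 1) := fun j => hf (qk_adj_layer k _ j)
      have h2 : ∀ j, d j ≠ c j := fun j =>
        (hf (qk_adj_next k ⟨n, hn⟩ ⟨n + 1, h⟩ hstep j j (Or.inl rfl))).symm
      have h3 : ∀ j, d (j + 1) ≠ c j := fun j =>
        (hf (qk_adj_next k ⟨n, hn⟩ ⟨n + 1, h⟩ hstep j (j + 1) (Or.inr rfl))).symm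
      rcases fin4_step c d hc h1 h2 h3 with hcase | hcase
      · refine ⟨t + 1, fun j => ?_⟩
        have h' : f (⟨n + 1, h⟩, j) = f ((0 : Fin (k + 2)), j + 1 + t) :=
          (hcase j).trans (ht (j + 1))
        rw [h', fin4_assoc1]
      · refine ⟨t + 2, fun j => ?_⟩
        have h' : f (⟨n + 1, h⟩, j) = f ((0 : Fin (k + 2)), j + 2 + t) :=
          (hcase j).trans (ht (j + 2))
        rw [h', fin4_assoc2]
  intro i
  obtain ⟨t, ht⟩ := key i.val i.isLt
  exact ⟨t, fun j => by rw [show (i : Fin (k+2)) = ⟨i.val, i.isLt⟩ from rfl]; exact ht j⟩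

end Aux

/-- If two type I proper 4-colorings of `Q_k` (four pairwise distinct colors on
`a_0, b_0, c_0, d_0`) share a nonempty color class, then they induce the same
coloring-partition. -/
theorem Qk_typeI_common_class (k : ℕ) (f g : Fin (k + 2) × Fin 4 → Fin 4)
    (hf : IsProperColoring (Qk k) f) (hg : IsProperColoring (Qk k) g)
    (hfI : Function.Injective (fun j : Fin 4 => f ((0 : Fin (k + 2)), j)))
    (hgI : Function.Injective (fun j : Fin 4 => g ((0 : Fin (k + 2)), j)))
    (hcommon : ∃ c c', (f ⁻¹' {c}).Nonempty ∧ f ⁻¹' {c} = g ⁻¹' {c'}) :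
    colPart f = colPart g := by
  classical
  set f0 : Fin 4 → Fin 4 := fun j => f ((0 : Fin (k + 2)), j) with hf0
  set g0 : Fin 4 → Fin 4 := fun j => g ((0 : Fin (k + 2)), j) with hg0
  have hf0s : Function.Surjective f0 := Finite.injective_iff_surjective.mp hfI
  have hg0s : Function.Surjective g0 := Finite.injective_iff_surjective.mp hgI
  have hfl := qk_layers k f hf hfI
  have hgl := qk_layers k g hg hgI
  set s : Fin (k + 2) → Fin 4 := fun i => (hfl i).choose with hs_def
  set s' : Fin (k + 2) → Fin 4 := fun i => (hgl i).choose with hs'_def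
  have hs : ∀ i j, f (i, j) = f0 (j + s i) := fun i => (hfl i).choose_spec
  have hs' : ∀ i j, g (i, j) = g0 (j + s' i) := fun i => (hgl i).choose_spec
  have hfp : ∀ p : Fin (k + 2) × Fin 4, f p = f0 (p.2 + s p.1) := fun p => hs p.1 p.2
  have hgp : ∀ p : Fin (k + 2) × Fin 4, g p = g0 (p.2 + s' p.1) := fun p => hs' p.1 p.2
  obtain ⟨c, c', ⟨p, hp⟩, hcc⟩ := hcommon
  have hpc : f p = c := hp
  have hpc' : g p = c' := by
    have : p ∈ g ⁻¹' {c'} := hcc ▸ hp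
    exact this
  set t : Fin 4 := p.2 + s p.1 with ht_def
  set t' : Fin 4 := p.2 + s' p.1 with ht'_def
  have hct : c = f0 t := by rw [← hpc, hfp]
  have hct' : c' = g0 t' := by rw [← hpc', hgp]
  -- shift relation
  have hshift : ∀ i, s' i = (t' - t) + s i := by
    intro i
    have hq : f (i, t - s i) = c := by
      rw [hfp, hct]; simp only; rw [fin4_sub_add]
    have hq' : g (i, t - s i) = c' := by
      have : ((i, t - s i) : Fin (k + 2) × Fin 4) ∈ f ⁻¹' {c} := hq
      rw [hcc] at this
      exact this
    rw [hgp, hct'] at hq'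
    have := hgI hq'
    exact fin4_solve t t' (s i) (s' i) this
  set δ : Fin 4 := t' - t with hδ_def
  have hclass : ∀ u, f ⁻¹' {f0 u} = g ⁻¹' {g0 (δ + u)} := by
    intro u
    ext q
    simp only [Set.mem_preimage, Set.mem_singleton_iff, hfp, hgp]
    constructor
    · intro h
      have hu := hfI h
      rw [hshift q.1]
      exact congrArg g0 ((fin4_cancel q.2 (s q.1) δ u).mpr hu)
    · intro h
      rw [hshift q.1] at h
      have hu := hgI h
      exact congrArg f0 ((fin4_cancel q.2 (s q.1) δ u).mp hu)
  apply Set.Subset.antisymm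
  · exact colPart_subset_s12 f g f0 g0 hf0s (fun u => ⟨δ + u, hclass u⟩)
  · refine colPart_subset_s12 g f g0 f0 hg0s (fun u => ⟨u - δ, ?_⟩)
    rw [hclass (u - δ), fin4_add_sub]
end

section
/- Let k ≥ 0. Any two proper 4-colorings f and g of Q_k satisfying f(b_0) = f(d_0) and g(b_0) = g(d_0) (type II colorings) are connected, i.e. they are related by the reflexive-transitive closure of the relation 'the two colorings have a common color class'. Consequently, all color classes of all type II colorings of Q_k lie in a single connected component of the 4-coloring complex B(Q_k). -/
/-!
In a type II coloring every layer `a_i b_i c_i d_i` of `Q_k` uses exactly three colors, with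
either `b_i = d_i` or `a_i = c_i`, and layer `i + 1` is determined by layer `i` together with
the type of layer `i + 1`; the chords force both end layers to have `b = d`. Hence a type II
coloring is a permutation of the colors applied to a standard coloring determined by the
sequence of layer types. Changing the type of an inner layer `i + 1` preserves the color class
of the repeated color of layer `i`, so it is one step of `ColAdj`; changing the inner layers one
at a time reaches the coloring in which every layer has `b = d`, and permuting colors preserves
every color class. Color classes of connected colorings are joined in `B(Q_k)` through the
shared classes.
-/

open Equiv Relation

section ColoringComplex

variable {V : Type*} {G : SimpleGraph V}

instance : Std.Symm (ColAdj G) where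
  symm _ _ := fun ⟨hf, hg, c, c', hne, heq⟩ => ⟨hg, hf, c', c, heq ▸ hne, heq.symm⟩

theorem colAdj_perm_comp [Nonempty V] {h : V → Fin 4} (hh : IsProperColoring G h)
    (σ : Perm (Fin 4)) : ColAdj G (σ ∘ h) h := by
  obtain ⟨v⟩ := ‹Nonempty V›
  refine ⟨fun u w huw he => hh huw (σ.injective he), hh, σ (h v), h v, ⟨v, rfl⟩, ?_⟩
  ext w
  simp

theorem colorComplex_reachable_of_mem_colPart {h : V → Fin 4} (hh : IsProperColoring G h)
    {A B : colorClasses G} (hA : (A : Set V) ∈ colPart h) (hB : (B : Set V) ∈ colPart h) :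
    (colorComplex G).Reachable A B := by
  by_cases hAB : A = B
  · exact hAB ▸ SimpleGraph.Reachable.refl A
  · refine SimpleGraph.Adj.reachable ?_
    rw [colorComplex, SimpleGraph.fromRel_adj]
    exact ⟨hAB, Or.inl ⟨h, hh, hA.2, hB.2⟩⟩

theorem colorComplex_reachable_of_reflTransGen {f g : V → Fin 4} (hf : IsProperColoring G f)
    (hfg : ReflTransGen (ColAdj G) f g) {A B : colorClasses G} (hA : (A : Set V) ∈ colPart f)
    (hB : (B : Set V) ∈ colPart g) : (colorComplex G).Reachable A B := by
  induction hfg generalizing B with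
  | refl => exact colorComplex_reachable_of_mem_colPart hf hA hB
  | @tail h g _ hhg ih =>
    obtain ⟨hh, hg, c, c', hne, heq⟩ := hhg
    let C : colorClasses G := ⟨h ⁻¹' {c}, hne, h, c, hh, rfl⟩
    exact (ih (B := C) ⟨hne, c, rfl⟩).trans
      (colorComplex_reachable_of_mem_colPart hg ⟨hne, c', heq⟩ hB)

end ColoringComplex

namespace Qk

variable {k : ℕ}

theorem adj_of_qkRel {u v : Fin (k + 2) × Fin 4} (h : qkRel k u v) : (Qk k).Adj u v := by
  refine (SimpleGraph.fromRel_adj _ _ _).mpr ⟨?_, Or.inl h⟩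
  rintro rfl
  rcases h with ⟨-, h⟩ | ⟨h, -⟩ | ⟨-, -, h, h'⟩ | ⟨-, -, h, h'⟩
  · exact (by decide : ∀ j : Fin 4, j ≠ j + 1) _ h
  · omega
  all_goals exact absurd (h.symm.trans h') (by decide)

theorem isProperColoring_iff_s13 {f : Fin (k + 2) × Fin 4 → Fin 4} :
    IsProperColoring (Qk k) f ↔ ∀ u v, qkRel k u v → f u ≠ f v := by
  refine ⟨fun hf u v h => hf (adj_of_qkRel h), fun hf u v huv => ?_⟩
  rcases (SimpleGraph.fromRel_adj _ _ _).mp huv with ⟨-, h | h⟩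
  · exact hf u v h
  · exact (hf v u h).symm

/-- A layer of shape `false` is colored `(0, 1, 2, 1)` (so `b = d`), one of shape `true` is
colored `(0, 1, 0, 2)` (so `a = c`), up to a permutation of the colors: the frame. -/
def layerShape : Bool → Fin 4 → Fin 4
  | false => ![0, 1, 2, 1]
  | true => ![0, 1, 0, 2]

/-- The color that `layerShape b` uses twice. -/
def repeated : Bool → Fin 4
  | false => 1
  | true => 0

/-- If a layer has frame `τ` and shape `b` and the next layer has shape `b'`, the next layer has
frame `τ * shapeStep b b'`. -/
def shapeStep : Bool → Bool → Perm (Fin 4)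
  | false, false => ⟨![2, 3, 0, 1], ![2, 3, 0, 1], by decide, by decide⟩
  | false, true => ⟨![3, 2, 0, 1], ![2, 3, 1, 0], by decide, by decide⟩
  | true, false => ⟨![1, 3, 2, 0], ![3, 0, 2, 1], by decide, by decide⟩
  | true, true => ⟨![3, 2, 1, 0], ![3, 2, 1, 0], by decide, by decide⟩

def frame (s : ℕ → Bool) : ℕ → Perm (Fin 4)
  | 0 => 1
  | i + 1 => frame s i * shapeStep (s i) (s (i + 1))

def layered {n : ℕ} (s : ℕ → Bool) (v : Fin n × Fin 4) : Fin 4 :=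
  frame s v.1 (layerShape (s v.1) v.2)

theorem layerShape_ne_succ : ∀ b j, layerShape b j ≠ layerShape b (j + 1) := by decide

theorem layerShape_ne_shapeStep :
    ∀ b b' j, layerShape b j ≠ shapeStep b b' (layerShape b' j) := by decide

theorem layerShape_ne_shapeStep_succ :
    ∀ b b' j, layerShape b j ≠ shapeStep b b' (layerShape b' (j + 1)) := by decide

theorem layerShape_zero_eq_two_iff : ∀ b, layerShape b 0 = layerShape b 2 ↔ b = true := by
  decide

theorem layerShape_repeated : ∀ b, layerShape b (repeated b) = repeated b := by decide

theorem shapeStep_layerShape_ne_repeated :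
    ∀ b b' j, shapeStep b b' (layerShape b' j) ≠ repeated b := by decide

theorem shapeStep_shapeStep_eq_repeated_iff : ∀ b c c' d x,
    shapeStep b c' (shapeStep c' d x) = repeated b ↔
      shapeStep b c (shapeStep c d x) = repeated b := by decide

set_option maxRecDepth 10000 in
theorem exists_shapeStep : ∀ (L : Fin 4 → Fin 4) (b : Bool), (∀ j, L j ≠ L (j + 1)) →
    (∀ j, layerShape b j ≠ L j) → (∀ j, layerShape b j ≠ L (j + 1)) →
    ∃ b', ∀ j, L j = shapeStep b b' (layerShape b' j) := by
  decide

theorem exists_injective_vecCons_three :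
    ∀ a b c : Fin 4, a ≠ b → b ≠ c → a ≠ c → ∃ d, Function.Injective ![a, b, c, d] := by
  decide

theorem exists_perm_layerShape_false {L : Fin 4 → Fin 4} (h01 : L 0 ≠ L 1) (h12 : L 1 ≠ L 2)
    (h02 : L 0 ≠ L 2) (h13 : L 1 = L 3) :
    ∃ σ : Perm (Fin 4), ∀ j, L j = σ (layerShape false j) := by
  obtain ⟨d, hd⟩ := exists_injective_vecCons_three _ _ _ h01 h12 h02
  refine ⟨ofBijective _ hd.bijective_of_finite, fun j => ?_⟩
  fin_cases j <;> simp [layerShape, h13]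

theorem frame_congr {s s' : ℕ → Bool} {i : ℕ} (h : ∀ j ≤ i, s j = s' j) :
    frame s i = frame s' i := by
  induction i with
  | zero => rfl
  | succ i ih =>
    simp only [frame, ih fun j hj => h j (by omega), h i i.le_succ, h (i + 1) le_rfl]

theorem layered_isProperColoring {s : ℕ → Bool} (h0 : s 0 = false) (hk : s (k + 1) = false) :
    IsProperColoring (Qk k) (layered s) := by
  rw [isProperColoring_iff_s13]
  rintro ⟨i, j⟩ ⟨i', j'⟩ (⟨rfl, rfl⟩ | ⟨hi, rfl | rfl⟩ | ⟨hi, hi', rfl, rfl⟩ | ⟨hi, hi', rfl, rfl⟩)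
  · exact (frame s i).injective.ne (layerShape_ne_succ _ _)
  all_goals dsimp only at hi
  · simp only [layered, hi, frame, Perm.mul_apply]
    exact (frame s i).injective.ne (layerShape_ne_shapeStep _ _ _)
  · simp only [layered, hi, frame, Perm.mul_apply]
    exact (frame s i).injective.ne (layerShape_ne_shapeStep_succ _ _ _)
  · dsimp only at hi'
    simp only [layered, hi, hi', h0]
    exact (Equiv.injective _).ne (by decide)
  · dsimp only at hi'
    simp only [layered, hi, hi', hk]
    exact (Equiv.injective _).ne (by decide)

def layerType {n : ℕ} (f : Fin n × Fin 4 → Fin 4) (i : ℕ) : Bool :=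
  if h : i < n then decide (f (⟨i, h⟩, 0) = f (⟨i, h⟩, 2)) else false

theorem layerType_val {n : ℕ} (f : Fin n × Fin 4 → Fin 4) (i : Fin n) :
    layerType f i = decide (f (i, 0) = f (i, 2)) :=
  dif_pos i.isLt

variable {f : Fin (k + 2) × Fin 4 → Fin 4}

theorem layerType_zero (hf : IsProperColoring (Qk k) f) : layerType f 0 = false :=
  (layerType_val f 0).trans <| decide_eq_false <|
    isProperColoring_iff_s13.mp hf (0, 0) (0, 2) (Or.inr (Or.inr (Or.inl ⟨rfl, rfl, rfl, rfl⟩)))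

theorem layerType_of_lt (hf : IsProperColoring (Qk k) f) {i : ℕ} (hi : k < i) :
    layerType f i = false := by
  obtain rfl | hi := (Nat.succ_le_of_lt hi).eq_or_lt
  · exact (layerType_val f (Fin.last (k + 1))).trans <| decide_eq_false <|
      isProperColoring_iff_s13.mp hf _ _ (Or.inr (Or.inr (Or.inr ⟨rfl, rfl, rfl, rfl⟩)))
  · exact dif_neg (by omega)

theorem exists_layer_succ (hf : IsProperColoring (Qk k) f) (i : Fin (k + 1)) (τ : Perm (Fin 4))
    (b : Bool) (h : ∀ j, f (i.castSucc, j) = τ (layerShape b j)) :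
    ∃ b', ∀ j, f (i.succ, j) = τ (shapeStep b b' (layerShape b' j)) := by
  have hq := isProperColoring_iff_s13.mp hf
  have hi : ((i.succ : Fin (k + 2)) : ℕ) = (i.castSucc : ℕ) + 1 := by simp
  obtain ⟨b', hb'⟩ := exists_shapeStep (fun j => τ.symm (f (i.succ, j))) b
    (fun j hj => hq (i.succ, j) (i.succ, j + 1) (Or.inl ⟨rfl, rfl⟩) (τ.symm.injective hj))
    (fun j hj => hq (i.castSucc, j) (i.succ, j) (Or.inr (Or.inl ⟨hi, Or.inl rfl⟩))
      (by rw [h j, τ.eq_symm_apply.mp hj]))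
    (fun j hj => hq (i.castSucc, j) (i.succ, j + 1) (Or.inr (Or.inl ⟨hi, Or.inr rfl⟩))
      (by rw [h j, τ.eq_symm_apply.mp hj]))
  exact ⟨b', fun j => τ.symm_apply_eq.mp (hb' j)⟩

theorem eq_perm_comp_layered (hf : IsProperColoring (Qk k) f)
    (hII : f ((0 : Fin (k + 2)), (1 : Fin 4)) = f ((0 : Fin (k + 2)), (3 : Fin 4))) :
    ∃ σ : Perm (Fin 4), f = σ ∘ layered (layerType f) := by
  have hq := isProperColoring_iff_s13.mp hf
  obtain ⟨σ, hσ⟩ := exists_perm_layerShape_false (L := fun j => f (0, j))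
    (hq _ _ (Or.inl ⟨rfl, rfl⟩)) (hq _ _ (Or.inl ⟨rfl, rfl⟩))
    (hq _ _ (Or.inr (Or.inr (Or.inl ⟨rfl, rfl, rfl, rfl⟩)))) hII
  refine ⟨σ, funext fun ⟨i, j⟩ => ?_⟩
  induction i using Fin.induction generalizing j with
  | zero => simpa [layered, layerType_zero hf, frame] using hσ j
  | succ i ih =>
    obtain ⟨b', hb'⟩ := exists_layer_succ hf i (σ * frame (layerType f) i) (layerType f i) ih
    have htype : layerType f (i + 1) = b' := by
      rw [← Fin.val_succ, layerType_val, hb' 0, hb' 2]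
      simp [layerShape_zero_eq_two_iff]
    simpa [layered, frame, htype] using hb' j

section Flip

open Function

variable {s : ℕ → Bool} {m : ℕ}

theorem frame_update_of_le (b : Bool) {i : ℕ} (hi : i ≤ m) :
    frame (update s (m + 1) b) i = frame s i :=
  frame_congr fun j hj => update_of_ne (by omega) _ _

theorem frame_succ_layerShape_ne (j : Fin 4) :
    frame s (m + 1) (layerShape (s (m + 1)) j) ≠ frame s m (repeated (s m)) :=
  (frame s m).injective.ne (shapeStep_layerShape_ne_repeated _ _ _)

theorem frame_update_apply_eq_iff (b : Bool) {n : ℕ} (hn : m + 2 ≤ n) (x : Fin 4) :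
    frame (update s (m + 1) b) n x = frame s m (repeated (s m)) ↔
      frame s n x = frame s m (repeated (s m)) := by
  induction n, hn using Nat.le_induction generalizing x with
  | base =>
    simp only [frame, Perm.mul_apply, frame_update_of_le b le_rfl, update_self,
      update_of_ne (show m ≠ m + 1 by omega), update_of_ne (show m + 2 ≠ m + 1 by omega),
      (frame s m).apply_eq_iff_eq]
    exact shapeStep_shapeStep_eq_repeated_iff _ _ _ _ _
  | succ n hn ih =>
    simp only [frame, Perm.mul_apply, update_of_ne (show n ≠ m + 1 by omega),
      update_of_ne (show n + 1 ≠ m + 1 by omega)]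
    exact ih _

theorem layered_update_eq_iff (b : Bool) (v : Fin (k + 2) × Fin 4) :
    layered (update s (m + 1) b) v = frame s m (repeated (s m)) ↔
      layered s v = frame s m (repeated (s m)) := by
  obtain ⟨i, j⟩ := v
  simp only [layered]
  rcases lt_trichotomy (i : ℕ) (m + 1) with hi | hi | hi
  · rw [frame_update_of_le b (by omega), update_of_ne (by omega)]
  · have hne := frame_succ_layerShape_ne (s := update s (m + 1) b) (m := m) j
    rw [frame_update_of_le b le_rfl, update_of_ne (show m ≠ m + 1 by omega)] at hne
    rw [hi]
    exact iff_of_false hne (frame_succ_layerShape_ne j)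
  · rw [update_of_ne (by omega)]
    exact frame_update_apply_eq_iff b hi _

theorem colAdj_layered_update (h0 : s 0 = false) (hk : s (k + 1) = false) (hm : m + 1 ≤ k)
    (b : Bool) : ColAdj (Qk k) (layered s) (layered (update s (m + 1) b)) := by
  have hm' : m < k + 2 := by omega
  refine ⟨layered_isProperColoring h0 hk, layered_isProperColoring ?_ ?_,
    frame s m (repeated (s m)), frame s m (repeated (s m)),
    ⟨(⟨m, hm'⟩, repeated (s m)), by simp [layered, layerShape_repeated]⟩, ?_⟩
  · rwa [update_of_ne (by omega)]
  · rwa [update_of_ne (by omega)]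
  · ext v
    exact (layered_update_eq_iff b v).symm

end Flip

theorem reflTransGen_layered_false {s : ℕ → Bool} (h0 : s 0 = false)
    (hk : ∀ i, k < i → s i = false) :
    ReflTransGen (ColAdj (Qk k)) (layered s) (layered fun _ => false) := by
  suffices ∀ n ≤ k, ∀ s : ℕ → Bool, s 0 = false → (∀ i, n < i → s i = false) →
      ReflTransGen (ColAdj (Qk k)) (layered s) (layered fun _ => false) from
    this k le_rfl s h0 hk
  intro n
  induction n with
  | zero =>
    intro _ s h0 hs
    obtain rfl : s = fun _ => false := funext fun i => i.eq_zero_or_pos.elim (· ▸ h0) (hs i)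
    rfl
  | succ n ih =>
    intro hn s h0 hs
    have hstep := colAdj_layered_update h0 (hs _ (by omega)) hn false
    refine .head hstep (ih (by omega) _ ?_ fun i hi => ?_)
    · rwa [Function.update_of_ne (by omega)]
    · obtain rfl | hi := (Nat.succ_le_of_lt hi).eq_or_lt
      · exact Function.update_self ..
      · rw [Function.update_of_ne (by omega)]
        exact hs i hi

theorem reflTransGen_layered_false_of_typeII (hf : IsProperColoring (Qk k) f)
    (hII : f ((0 : Fin (k + 2)), (1 : Fin 4)) = f ((0 : Fin (k + 2)), (3 : Fin 4))) :
    ReflTransGen (ColAdj (Qk k)) f (layered fun _ => false) := by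
  obtain ⟨σ, hσ⟩ := eq_perm_comp_layered hf hII
  have hlayered := layered_isProperColoring (layerType_zero hf) (layerType_of_lt hf k.lt_succ_self)
  rw [hσ]
  exact .head (colAdj_perm_comp hlayered σ)
    (reflTransGen_layered_false (layerType_zero hf) fun _ => layerType_of_lt hf)

end Qk

/-- Any two type II proper 4-colorings of `Q_k` (those with `f(b_0) = f(d_0)`) are
connected, i.e. related by the reflexive-transitive closure of 'having a common color
class'; consequently all color classes of all type II colorings lie in a single
connected component of `B(Q_k)`. -/
theorem Qk_typeII_connected (k : ℕ) (f g : Fin (k + 2) × Fin 4 → Fin 4)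
    (hf : IsProperColoring (Qk k) f) (hg : IsProperColoring (Qk k) g)
    (hfII : f ((0 : Fin (k + 2)), (1 : Fin 4)) = f ((0 : Fin (k + 2)), (3 : Fin 4)))
    (hgII : g ((0 : Fin (k + 2)), (1 : Fin 4)) = g ((0 : Fin (k + 2)), (3 : Fin 4))) :
    Relation.ReflTransGen (ColAdj (Qk k)) f g ∧
    ∀ A B : colorClasses (Qk k),
      (A : Set (Fin (k + 2) × Fin 4)) ∈ colPart f →
      (B : Set (Fin (k + 2) × Fin 4)) ∈ colPart g →
      (colorComplex (Qk k)).connectedComponentMk A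
        = (colorComplex (Qk k)).connectedComponentMk B := by
  have hfg : ReflTransGen (ColAdj (Qk k)) f g :=
    (Qk.reflTransGen_layered_false_of_typeII hf hfII).trans
      (symm (Qk.reflTransGen_layered_false_of_typeII hg hgII))
  exact ⟨hfg, fun A B hA hB =>
    SimpleGraph.ConnectedComponent.sound (colorComplex_reachable_of_reflTransGen hf hfg hA hB)⟩
end

section
/- Let k ≥ 1 and let 0 ≤ i ≤ k−1. Every proper 4-coloring of the subgraph of Q_k induced on the vertex set {a_j, b_j, c_j, d_j : 0 ≤ j ≤ i} extends in exactly two ways to a proper 4-coloring of the subgraph of Q_k induced on {a_j, b_j, c_j, d_j : 0 ≤ j ≤ i+1}. -/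
section Extension

variable {V : Type*} {S T : Set V}

open Classical in
noncomputable def piecewiseExtension {α : Type*} (f : S → α) (h : ↥(T \ S) → α) : T → α :=
  fun v => if hv : (v : V) ∈ S then f ⟨v, hv⟩ else h ⟨v, v.2, hv⟩

theorem piecewiseExtension_of_mem {α : Type*} (f : S → α) (h : ↥(T \ S) → α) {v : T}
    (hv : (v : V) ∈ S) : piecewiseExtension f h v = f ⟨v, hv⟩ :=
  dif_pos hv

theorem piecewiseExtension_of_notMem {α : Type*} (f : S → α) (h : ↥(T \ S) → α) {v : T}
    (hv : (v : V) ∉ S) : piecewiseExtension f h v = h ⟨v, v.2, hv⟩ :=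
  dif_neg hv

def IsCompatibleColoring (G : SimpleGraph V) (f : S → Fin 4) (h : ↥(T \ S) → Fin 4) : Prop :=
  IsProperColoring (G.induce (T \ S)) h ∧
    ∀ (u : V) (hu : u ∈ S) (w : ↥(T \ S)), G.Adj u w → f ⟨u, hu⟩ ≠ h w

theorem IsCompatibleColoring.isProperColoring_piecewiseExtension {G : SimpleGraph V}
    {f : S → Fin 4} {h : ↥(T \ S) → Fin 4} (hf : IsProperColoring (G.induce S) f)
    (hfh : IsCompatibleColoring G f h) :
    IsProperColoring (G.induce T) (piecewiseExtension f h) := by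
  obtain ⟨hh, hfh⟩ := hfh
  intro u v huv
  by_cases hu : (u : V) ∈ S <;> by_cases hv : (v : V) ∈ S
  · simpa only [piecewiseExtension_of_mem _ _ hu, piecewiseExtension_of_mem _ _ hv]
      using hf (u := ⟨u, hu⟩) (v := ⟨v, hv⟩) huv
  · simpa only [piecewiseExtension_of_mem _ _ hu, piecewiseExtension_of_notMem _ _ hv]
      using hfh u hu ⟨v, v.2, hv⟩ huv
  · simpa only [piecewiseExtension_of_notMem _ _ hu, piecewiseExtension_of_mem _ _ hv]
      using (hfh v hv ⟨u, u.2, hu⟩ huv.symm).symm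
  · simpa only [piecewiseExtension_of_notMem _ _ hu, piecewiseExtension_of_notMem _ _ hv]
      using hh (u := ⟨u, u.2, hu⟩) (v := ⟨v, v.2, hv⟩) huv

noncomputable def extensionEquiv (G : SimpleGraph V) (hST : S ⊆ T) (f : S → Fin 4)
    (hf : IsProperColoring (G.induce S) f) :
    {g : T → Fin 4 // IsProperColoring (G.induce T) g ∧
      ∀ (v : V) (hv : v ∈ S), g ⟨v, hST hv⟩ = f ⟨v, hv⟩} ≃
    {h : ↥(T \ S) → Fin 4 // IsCompatibleColoring G f h} where
  toFun g := ⟨fun w => g.1 ⟨w, w.2.1⟩, fun _ _ huv => g.2.1 huv,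
    fun u hu w huw => g.2.2 u hu ▸ g.2.1 (u := ⟨u, hST hu⟩) (v := ⟨w, w.2.1⟩) huw⟩
  invFun h := ⟨piecewiseExtension f h.1, h.2.isProperColoring_piecewiseExtension hf,
    fun _ hv => piecewiseExtension_of_mem _ _ hv⟩
  left_inv g := Subtype.ext <| funext fun v => by
    by_cases hv : (v : V) ∈ S
    · exact (piecewiseExtension_of_mem f _ hv).trans (g.2.2 v hv).symm
    · exact piecewiseExtension_of_notMem f _ hv
  right_inv h := Subtype.ext <| funext fun w =>
    piecewiseExtension_of_notMem f h.1 (v := ⟨w, w.2.1⟩) w.2.2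

end Extension

def IsLayerExtension (F t : Fin 4 → Fin 4) : Prop :=
  (∀ j, t j ≠ t (j + 1)) ∧ ∀ j, F j ≠ t j ∧ F j ≠ t (j + 1)

instance (F t : Fin 4 → Fin 4) : Decidable (IsLayerExtension F t) :=
  inferInstanceAs (Decidable (_ ∧ _))

theorem card_isLayerExtension (F : Fin 4 → Fin 4) (hF : ∀ j, F j ≠ F (j + 1)) :
    Nat.card {t // IsLayerExtension F t} = 2 := by
  rw [Nat.card_eq_fintype_card]
  revert F
  decide +kernel

namespace Qk

variable {k : ℕ}

theorem adj_succ (m : Fin (k + 2)) (j : Fin 4) : (Qk k).Adj (m, j) (m, j + 1) := by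
  refine (SimpleGraph.fromRel_adj _ _ _).2 ⟨?_, Or.inl (Or.inl ⟨rfl, rfl⟩)⟩
  fin_cases j <;> simp

theorem adj_same_layer_iff {m : Fin (k + 2)} (hm : (m : ℕ) ≠ 0) (hm' : (m : ℕ) ≠ k + 1)
    {j j' : Fin 4} : (Qk k).Adj (m, j) (m, j') ↔ j' = j + 1 ∨ j = j' + 1 := by
  simp only [Qk, SimpleGraph.fromRel_adj, qkRel, hm, hm']
  fin_cases j <;> fin_cases j' <;> simp

theorem adj_next_layer_iff {m m' : Fin (k + 2)} (h : (m' : ℕ) = m + 1) {j j' : Fin 4} :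
    (Qk k).Adj (m, j) (m', j') ↔ j' = j ∨ j' = j + 1 := by
  have hne : m ≠ m' := fun e => by simp [e] at h
  have hlast : (m : ℕ) ≠ k + 1 := by have := m'.isLt; omega
  simp [Qk, qkRel, h, hne, hne.symm, hlast, add_assoc]

theorem fst_le_succ_of_adj {u v : Fin (k + 2) × Fin 4} (h : (Qk k).Adj u v) :
    (v.1 : ℕ) ≤ u.1 + 1 := by
  obtain ⟨-, h⟩ := (SimpleGraph.fromRel_adj _ _ _).1 h
  simp only [qkRel, Fin.ext_iff] at h
  omega

variable {i : ℕ}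

def layerEquiv (hi : i + 1 < k + 2) :
    Fin 4 ≃ ↥({v : Fin (k + 2) × Fin 4 | (v.1 : ℕ) ≤ i + 1} \ {v | (v.1 : ℕ) ≤ i}) where
  toFun j := ⟨(⟨i + 1, hi⟩, j), by simp⟩
  invFun w := w.1.2
  left_inv _ := rfl
  right_inv := by
    rintro ⟨⟨m, j⟩, hm, hm'⟩
    have : (m : ℕ) = i + 1 := by simp only [Set.mem_ofPred_eq] at hm hm'; omega
    exact Subtype.ext <| Prod.ext (Fin.ext this.symm) rfl

theorem isProperColoring_comp_layerEquiv_symm_iff (hi : i + 1 < k + 2) (hchord : i + 1 ≠ k + 1)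
    (t : Fin 4 → Fin 4) :
    IsProperColoring ((Qk k).induce ({v : Fin (k + 2) × Fin 4 | (v.1 : ℕ) ≤ i + 1} \
      {v | (v.1 : ℕ) ≤ i})) (t ∘ (layerEquiv hi).symm) ↔ ∀ j, t j ≠ t (j + 1) := by
  refine ⟨fun h j => h (u := layerEquiv hi j) (v := layerEquiv hi (j + 1)) (adj_succ _ j),
    fun h u v huv => ?_⟩
  obtain ⟨j, rfl⟩ := (layerEquiv hi).surjective u
  obtain ⟨j', rfl⟩ := (layerEquiv hi).surjective v
  simp only [Function.comp_apply, Equiv.symm_apply_apply]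
  rcases (adj_same_layer_iff (m := ⟨i + 1, hi⟩) (by simp) hchord).1 huv with rfl | rfl
  exacts [h j, (h j').symm]

def lastLayerColors (hi : i < k + 2) (f : {v : Fin (k + 2) × Fin 4 | (v.1 : ℕ) ≤ i} → Fin 4) :
    Fin 4 → Fin 4 :=
  fun j => f ⟨(⟨i, hi⟩, j), le_refl i⟩

theorem forall_adj_ne_comp_layerEquiv_symm_iff (hi : i + 1 < k + 2)
    (f : {v : Fin (k + 2) × Fin 4 | (v.1 : ℕ) ≤ i} → Fin 4) (t : Fin 4 → Fin 4) :
    (∀ (u : Fin (k + 2) × Fin 4) (hu : (u.1 : ℕ) ≤ i)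
        (w : ↥({v : Fin (k + 2) × Fin 4 | (v.1 : ℕ) ≤ i + 1} \ {v | (v.1 : ℕ) ≤ i})),
        (Qk k).Adj u w → f ⟨u, hu⟩ ≠ (t ∘ (layerEquiv hi).symm) w) ↔
      ∀ j, lastLayerColors (Nat.lt_of_succ_lt hi) f j ≠ t j ∧
        lastLayerColors (Nat.lt_of_succ_lt hi) f j ≠ t (j + 1) := by
  have hnext : ((⟨i + 1, hi⟩ : Fin (k + 2)) : ℕ) = (⟨i, Nat.lt_of_succ_lt hi⟩ : Fin (k + 2)) + 1 :=
    rfl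
  refine ⟨fun h j => ⟨?_, ?_⟩, fun h u hu w huw => ?_⟩
  · exact h _ (le_refl i) (layerEquiv hi j) ((adj_next_layer_iff hnext).2 (Or.inl rfl))
  · exact h _ (le_refl i) (layerEquiv hi (j + 1)) ((adj_next_layer_iff hnext).2 (Or.inr rfl))
  obtain ⟨j, rfl⟩ := (layerEquiv hi).surjective w
  obtain ⟨m, j₀⟩ := u
  have hm : m = ⟨i, Nat.lt_of_succ_lt hi⟩ :=
    Fin.ext (le_antisymm hu (Nat.le_of_succ_le_succ (fst_le_succ_of_adj huw)))
  subst hm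
  simp only [Function.comp_apply, Equiv.symm_apply_apply]
  rcases (adj_next_layer_iff hnext).1 huw with rfl | rfl
  exacts [(h _).1, (h _).2]

theorem isCompatibleColoring_comp_layerEquiv_symm_iff (hi : i + 1 < k + 2)
    (hchord : i + 1 ≠ k + 1) (f : {v : Fin (k + 2) × Fin 4 | (v.1 : ℕ) ≤ i} → Fin 4)
    (t : Fin 4 → Fin 4) :
    IsCompatibleColoring (Qk k) f (t ∘ (layerEquiv hi).symm) ↔
      IsLayerExtension (lastLayerColors (Nat.lt_of_succ_lt hi) f) t :=
  and_congr (isProperColoring_comp_layerEquiv_symm_iff hi hchord t)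
    (forall_adj_ne_comp_layerEquiv_symm_iff hi f t)

end Qk

theorem Qk_extension_count_general (k i : ℕ) (hi : i + 1 ≤ k)
    (f : {v : Fin (k + 2) × Fin 4 | (v.1 : ℕ) ≤ i} → Fin 4)
    (hf : IsProperColoring ((Qk k).induce {v | (v.1 : ℕ) ≤ i}) f) :
    Nat.card {g : {v : Fin (k + 2) × Fin 4 | (v.1 : ℕ) ≤ i + 1} → Fin 4 //
      IsProperColoring ((Qk k).induce {v | (v.1 : ℕ) ≤ i + 1}) g ∧
      ∀ (v : Fin (k + 2) × Fin 4) (hv : (v.1 : ℕ) ≤ i),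
        g ⟨v, Nat.le_succ_of_le hv⟩ = f ⟨v, hv⟩} = 2 := by
  have hi' : i + 1 < k + 2 := by omega
  have hcycle (j : Fin 4) : Qk.lastLayerColors (Nat.lt_of_succ_lt hi') f j ≠
      Qk.lastLayerColors (Nat.lt_of_succ_lt hi') f (j + 1) :=
    hf (u := ⟨_, le_refl i⟩) (v := ⟨_, le_refl i⟩) (Qk.adj_succ _ j)
  have hlayer := ((Qk.layerEquiv hi').arrowCongr (Equiv.refl (Fin 4))).subtypeEquiv
    (q := IsCompatibleColoring (Qk k) f) fun t =>
      (Qk.isCompatibleColoring_comp_layerEquiv_symm_iff hi' (by omega) f t).symm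
  exact (Nat.card_congr (extensionEquiv (Qk k) (fun _ => Nat.le_succ_of_le) f hf)).trans <|
    (Nat.card_congr hlayer).symm.trans (card_isLayerExtension _ hcycle)

/-- For `1 ≤ k` and `i + 1 ≤ k`, every proper 4-coloring of the subgraph of `Q_k`
induced on the first `i + 1` nested 4-cycles extends in exactly two ways to a proper
4-coloring of the subgraph induced on the first `i + 2` nested 4-cycles. -/
theorem Qk_extension_count (k i : ℕ) (hk : 1 ≤ k) (hi : i + 1 ≤ k)
    (f : {v : Fin (k + 2) × Fin 4 | (v.1 : ℕ) ≤ i} → Fin 4)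
    (hf : IsProperColoring ((Qk k).induce {v | (v.1 : ℕ) ≤ i}) f) :
    Nat.card {g : {v : Fin (k + 2) × Fin 4 | (v.1 : ℕ) ≤ i + 1} → Fin 4 //
      IsProperColoring ((Qk k).induce {v | (v.1 : ℕ) ≤ i + 1}) g ∧
      ∀ (v : Fin (k + 2) × Fin 4) (hv : (v.1 : ℕ) ≤ i),
        g ⟨v, Nat.le_succ_of_le hv⟩ = f ⟨v, hv⟩} = 2 :=
  Qk_extension_count_general k i hi f hf
end
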